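/- arXiv:math/0502398 — 6 statements merged into one kernel-verified Lean document; each statement's English description precedes it below -/
import Mathlib

section
/- Let X, X₀ : ℝ^N → ℝ^N be vector fields which are Lipschitz with constant κ > 0 and admit complete flows U and U₀ respectively. Let c₀, C, c > 0, m ∈ ℕ with cm > κ, and let E ⊆ ℝ^N. Assume that ‖X(z) − X₀(z)‖ ≤ c₀‖z‖^m for all z ∈ ℝ^N, and that ‖U₀(t)x‖ ≤ C e^{−ct}‖x‖ for all x ∈ E and t ≥ 0. Then for all x ∈ E and all t₁ ≥ t₂ ≥ 0 one has ‖U(−t₁)(U₀(t₁)x) − U(−t₂)(U₀(t₂)x)‖ ≤ c₀ C^m e^{−(cm−κ)t₂} ‖x‖^m / (cm − κ). In particular, for each x ∈ E the limit lim_{t→+∞} U(−t)(U₀(t)x) exists. -/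
/-!
Write `y = U₀(t₁)x` and `s = t₁ - t₂`. The curves `σ ↦ U(-σ)y` and `σ ↦ U₀(t₁ - σ)x` start
at `y` and solve the backward equations of `X` and of `X₀`. Along the second one the two fields
differ by at most `c₀ (C‖x‖)^m e^{-cm(t₁-σ)}`, so a Gronwall estimate with exponential forcing
bounds the gap at `σ = s` by `c₀ (C‖x‖)^m e^{-cm t₂}/(cm - κ)`. Applying `U(-t₂)`, which is
`e^{κt₂}`-Lipschitz, gives the Cauchy estimate, and since `cm > κ` the bound tends to `0`.
-/

open Filter Set Real
open scoped NNReal Topology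

section Gronwall

variable {F : Type*} [NormedAddCommGroup F] [NormedSpace ℝ F]

theorem norm_le_of_norm_deriv_right_le_of_supersolution {f f' : ℝ → F} {B B' ε : ℝ → ℝ}
    {K a b : ℝ} (hf : ContinuousOn f (Icc a b))
    (hf' : ∀ t ∈ Ico a b, HasDerivWithinAt f (f' t) (Ici t) t)
    (hB : ∀ t, HasDerivAt B (B' t) t) (ha : ‖f a‖ ≤ B a)
    (bound : ∀ t ∈ Ico a b, ‖f' t‖ ≤ K * ‖f t‖ + ε t)
    (hB' : ∀ t ∈ Ico a b, K * B t + ε t ≤ B' t) :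
    ∀ t ∈ Icc a b, ‖f t‖ ≤ B t := by
  intro t ht
  -- `B + η e^{(K+1)t}` is a strict supersolution, so the fencing theorem applies to it.
  have fence : ∀ η > 0, ‖f t‖ ≤ B t + η * exp ((K + 1) * t) := by
    intro η hη
    refine image_norm_le_of_norm_deriv_right_lt_deriv_boundary hf hf'
      (B := fun s => B s + η * exp ((K + 1) * s))
      (B' := fun s => B' s + η * (exp ((K + 1) * s) * ((K + 1) * 1))) ?_
      (fun s => (hB s).add ((((hasDerivAt_id' s).const_mul (K + 1)).exp).const_mul η)) ?_ ht
    · linarith [mul_pos hη (exp_pos ((K + 1) * a))]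
    · intro s hs hfs
      have hpos := mul_pos hη (exp_pos ((K + 1) * s))
      have h1 := bound s hs
      have h2 := hB' s hs
      rw [hfs] at h1
      nlinarith
  refine le_of_forall_pos_le_add fun δ hδ => ?_
  have hexp := exp_pos ((K + 1) * t)
  simpa [div_mul_cancel₀ _ hexp.ne'] using fence (δ / exp ((K + 1) * t)) (by positivity)

theorem hasDerivAt_mul_exp_sub_exp_div {A a K : ℝ} (h : a ≠ K) (t : ℝ) :
    HasDerivAt (fun t => A * (exp (a * t) - exp (K * t)) / (a - K))
      (K * (A * (exp (a * t) - exp (K * t)) / (a - K)) + A * exp (a * t)) t := by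
  have hexp : ∀ k : ℝ, HasDerivAt (fun t => exp (k * t)) (exp (k * t) * (k * 1)) t :=
    fun k => ((hasDerivAt_id t).const_mul k).exp
  refine ((((hexp a).sub (hexp K)).const_mul A).div_const (a - K)).congr_deriv ?_
  field_simp [sub_ne_zero.2 h]
  ring

theorem norm_sub_le_of_trajectories_of_exp_perturbation {Y Y₀ : F → F} {K : ℝ≥0}
    (hY : LipschitzWith K Y) {f g : ℝ → F} (hf : ∀ t, HasDerivAt f (Y (f t)) t)
    (hg : ∀ t, HasDerivAt g (Y₀ (g t)) t) (h0 : f 0 = g 0) {A a s : ℝ} (ha : a ≠ K)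
    (hs : 0 ≤ s) (hpert : ∀ t ∈ Ico 0 s, ‖Y (g t) - Y₀ (g t)‖ ≤ A * exp (a * t)) :
    ‖f s - g s‖ ≤ A * (exp (a * s) - exp (K * s)) / (a - K) := by
  refine norm_le_of_norm_deriv_right_le_of_supersolution (f' := fun t => Y (f t) - Y₀ (g t))
    (fun t _ => ((hf t).sub (hg t)).continuousAt.continuousWithinAt)
    (fun t _ => ((hf t).sub (hg t)).hasDerivWithinAt) (hasDerivAt_mul_exp_sub_exp_div ha)
    (by simp [h0]) (fun t ht => ?_) (fun _ _ => le_rfl) s ⟨hs, le_rfl⟩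
  calc ‖Y (f t) - Y₀ (g t)‖ ≤ ‖Y (f t) - Y (g t)‖ + ‖Y (g t) - Y₀ (g t)‖ :=
        norm_sub_le_norm_sub_add_norm_sub _ _ _
    _ ≤ K * ‖f t - g t‖ + A * exp (a * t) := add_le_add (hY.norm_sub_le _ _) (hpert t ht)

end Gronwall

section Flow

variable {F : Type*} [NormedAddCommGroup F] [NormedSpace ℝ F] {Y : F → F} {K : ℝ≥0}
  {U : ℝ → F → F}

theorem flow_add (hY : LipschitzWith K Y) (hU0 : ∀ x, U 0 x = x)
    (hU : ∀ x t, HasDerivAt (fun s => U s x) (Y (U t x)) t) (s t : ℝ) (x : F) :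
    U (s + t) x = U s (U t x) :=
  congrFun (ODE_solution_unique_univ (v := fun _ => Y) (s := fun _ => univ) (t₀ := 0)
    (fun _ => hY.lipschitzOnWith) (fun τ => ⟨(hU x (τ + t)).comp_add_const τ t, trivial⟩)
    (fun τ => ⟨hU (U t x) τ, trivial⟩) (by simp [hU0])) s

theorem hasDerivAt_flow_neg (hU : ∀ x t, HasDerivAt (fun s => U s x) (Y (U t x)) t)
    (x : F) (t : ℝ) : HasDerivAt (fun s => U (-s) x) (-Y (U (-t) x)) t := by
  simpa using (hU x (0 - t)).comp_const_sub 0 t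

theorem dist_flow_neg_le (hY : LipschitzWith K Y) (hU0 : ∀ x, U 0 x = x)
    (hU : ∀ x t, HasDerivAt (fun s => U s x) (Y (U t x)) t) {t : ℝ} (ht : 0 ≤ t) (p q : F) :
    dist (U (-t) p) (U (-t) q) ≤ dist p q * exp (K * t) := by
  have hd := hasDerivAt_flow_neg hU
  simpa using dist_le_of_trajectories_ODE (v := fun _ => -Y) (fun _ => hY.neg)
    (fun s _ => (hd p s).continuousAt.continuousWithinAt) (fun s _ => (hd p s).hasDerivWithinAt)
    (fun s _ => (hd q s).continuousAt.continuousWithinAt) (fun s _ => (hd q s).hasDerivWithinAt)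
    (by simp [hU0]) t ⟨ht, le_rfl⟩

end Flow

theorem cauchySeq_of_le_tendsto_0'_of_ge {α β : Type*} [PseudoMetricSpace α] [Nonempty β]
    [SemilatticeSup β] {u : β → α} (b : β → ℝ) (T : β)
    (h : ∀ n m, T ≤ n → n ≤ m → dist (u m) (u n) ≤ b n) (hb : Tendsto b atTop (𝓝 0)) :
    CauchySeq u := by
  refine Metric.cauchySeq_iff'.2 fun ε hε => ?_
  obtain ⟨N, hbN, hTN⟩ := ((hb.eventually (gt_mem_nhds hε)).and (eventually_ge_atTop T)).exists
  exact ⟨N, fun n hn => (h N n hTN hn).trans_lt hbN⟩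

theorem norm_sub_le_of_norm_le_mul_exp {F : Type*} [NormedAddCommGroup F] {X X₀ : F → F}
    {c₀ C c r : ℝ} {m : ℕ} (hc₀ : 0 ≤ c₀) (hdiff : ∀ z, ‖X z - X₀ z‖ ≤ c₀ * ‖z‖ ^ m) {z : F}
    {t σ : ℝ} (hz : ‖z‖ ≤ C * exp (-c * (t - σ)) * r) :
    ‖X z - X₀ z‖ ≤ c₀ * (C * r) ^ m * exp (-(c * m * t)) * exp (c * m * σ) := by
  have he : exp (m * (-c * (t - σ))) = exp (-(c * m * t)) * exp (c * m * σ) := by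
    rw [← exp_add]
    ring_nf
  calc ‖X z - X₀ z‖ ≤ c₀ * ‖z‖ ^ m := hdiff z
    _ ≤ c₀ * (C * exp (-c * (t - σ)) * r) ^ m := by gcongr
    _ = c₀ * (C * r) ^ m * exp (-(c * m * t)) * exp (c * m * σ) := by
      rw [mul_pow, mul_pow, mul_pow, ← exp_nat_mul, he]
      ring

theorem norm_wave_sub_le {F : Type*} [NormedAddCommGroup F] [NormedSpace ℝ F] {X X₀ : F → F}
    {K : ℝ≥0} (hX : LipschitzWith K X) {U U₀ : ℝ → F → F} (hU0 : ∀ x, U 0 x = x)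
    (hU : ∀ x t, HasDerivAt (fun s => U s x) (X (U t x)) t)
    (hU₀ : ∀ x t, HasDerivAt (fun s => U₀ s x) (X₀ (U₀ t x)) t) {c₀ C c : ℝ} {m : ℕ}
    (hc₀ : 0 ≤ c₀) (hC : 0 ≤ C) (hcm : K < c * m) (hdiff : ∀ z, ‖X z - X₀ z‖ ≤ c₀ * ‖z‖ ^ m)
    {x : F} (hdecay : ∀ t, 0 ≤ t → ‖U₀ t x‖ ≤ C * exp (-c * t) * ‖x‖) {t₁ t₂ : ℝ}
    (ht₂ : 0 ≤ t₂) (ht : t₂ ≤ t₁) :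
    ‖U (-t₁) (U₀ t₁ x) - U (-t₂) (U₀ t₂ x)‖ ≤
      c₀ * C ^ m * exp (-(c * m - K) * t₂) * ‖x‖ ^ m / (c * m - K) := by
  set A := c₀ * (C * ‖x‖) ^ m * exp (-(c * m * t₁)) with hA
  have hpert : ∀ σ ∈ Ico 0 (t₁ - t₂),
      ‖(-X) (U₀ (t₁ - σ) x) - (-X₀) (U₀ (t₁ - σ) x)‖ ≤ A * exp (c * m * σ) := fun σ hσ => by
    rw [Pi.neg_apply, Pi.neg_apply, neg_sub_neg, norm_sub_rev]
    exact norm_sub_le_of_norm_le_mul_exp hc₀ hdiff (hdecay _ (by linarith [hσ.2]))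
  have hgap := norm_sub_le_of_trajectories_of_exp_perturbation hX.neg
    (hasDerivAt_flow_neg hU (U₀ t₁ x)) (Y₀ := -X₀) (g := fun σ => U₀ (t₁ - σ) x)
    (fun σ => (hU₀ x (t₁ - σ)).comp_const_sub t₁ σ) (by simp [hU0]) hcm.ne' (sub_nonneg.2 ht)
    hpert
  have hsplit : U (-t₁) (U₀ t₁ x) = U (-t₂) (U (-(t₁ - t₂)) (U₀ t₁ x)) := by
    rw [← flow_add hX hU0 hU]
    ring_nf
  have hexp : exp (-(c * m * t₁)) * exp (c * m * (t₁ - t₂)) * exp (K * t₂) =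
      exp (-(c * m - K) * t₂) := by
    rw [← exp_add, ← exp_add]
    ring_nf
  have hcmK : 0 < c * m - K := sub_pos.2 hcm
  calc ‖U (-t₁) (U₀ t₁ x) - U (-t₂) (U₀ t₂ x)‖
      ≤ ‖U (-(t₁ - t₂)) (U₀ t₁ x) - U₀ (t₁ - (t₁ - t₂)) x‖ * exp (K * t₂) := by
        rw [hsplit, sub_sub_cancel, ← dist_eq_norm, ← dist_eq_norm]
        exact dist_flow_neg_le hX hU0 hU ht₂ _ _
    _ ≤ A * (exp (c * m * (t₁ - t₂)) - exp (K * (t₁ - t₂))) / (c * m - K) * exp (K * t₂) := by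
        gcongr
    _ ≤ A * exp (c * m * (t₁ - t₂)) / (c * m - K) * exp (K * t₂) := by
        gcongr
        exact sub_le_self _ (exp_pos _).le
    _ = c₀ * C ^ m * exp (-(c * m - K) * t₂) * ‖x‖ ^ m / (c * m - K) := by
        rw [hA, ← hexp]
        ring

theorem wave_operator_cauchy_estimate_general {N : ℕ}
    (X X₀ : EuclideanSpace ℝ (Fin N) → EuclideanSpace ℝ (Fin N))
    (κ : ℝ) (hκ : 0 < κ)
    (hXlip : ∀ z w : EuclideanSpace ℝ (Fin N), ‖X z - X w‖ ≤ κ * ‖z - w‖)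
    (U U₀ : ℝ → EuclideanSpace ℝ (Fin N) → EuclideanSpace ℝ (Fin N))
    (hU0 : ∀ x, U 0 x = x)
    (hUflow : ∀ x t, HasDerivAt (fun s => U s x) (X (U t x)) t)
    (hU₀flow : ∀ x t, HasDerivAt (fun s => U₀ s x) (X₀ (U₀ t x)) t)
    (c₀ C c : ℝ) (hc₀ : 0 < c₀) (hC : 0 < C)
    (m : ℕ) (hcm : κ < c * m)
    (E : Set (EuclideanSpace ℝ (Fin N)))
    (hdiff : ∀ z : EuclideanSpace ℝ (Fin N), ‖X z - X₀ z‖ ≤ c₀ * ‖z‖ ^ m)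
    (hdecay : ∀ x ∈ E, ∀ t : ℝ, 0 ≤ t → ‖U₀ t x‖ ≤ C * Real.exp (-c * t) * ‖x‖) :
    (∀ x ∈ E, ∀ t₁ t₂ : ℝ, 0 ≤ t₂ → t₂ ≤ t₁ →
      ‖U (-t₁) (U₀ t₁ x) - U (-t₂) (U₀ t₂ x)‖ ≤
        c₀ * C ^ m * Real.exp (-(c * m - κ) * t₂) * ‖x‖ ^ m / (c * m - κ)) ∧
    (∀ x ∈ E, ∃ L : EuclideanSpace ℝ (Fin N),
      Tendsto (fun t => U (-t) (U₀ t x)) atTop (nhds L)) := by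
  have hκK : (κ.toNNReal : ℝ) = κ := coe_toNNReal κ hκ.le
  have hXK : LipschitzWith κ.toNNReal X :=
    LipschitzWith.of_dist_le' fun z w => by simpa only [dist_eq_norm] using hXlip z w
  have est : ∀ x ∈ E, ∀ t₁ t₂ : ℝ, 0 ≤ t₂ → t₂ ≤ t₁ →
      ‖U (-t₁) (U₀ t₁ x) - U (-t₂) (U₀ t₂ x)‖ ≤
        c₀ * C ^ m * Real.exp (-(c * m - κ) * t₂) * ‖x‖ ^ m / (c * m - κ) := by
    intro x hx t₁ t₂ ht₂ ht
    simpa only [hκK] using norm_wave_sub_le hXK hU0 hUflow hU₀flow hc₀.le hC.le (by rwa [hκK])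
      hdiff (hdecay x hx) ht₂ ht
  refine ⟨est, fun x hx => cauchySeq_tendsto_of_complete ?_⟩
  have hbound_tendsto : Tendsto (fun t => c₀ * C ^ m * Real.exp (-(c * m - κ) * t) * ‖x‖ ^ m /
      (c * m - κ)) atTop (𝓝 0) := by
    have h := tendsto_exp_atBot.comp
      (tendsto_id.const_mul_atTop_of_neg (by linarith : -(c * m - κ) < 0))
    simpa using ((h.const_mul (c₀ * C ^ m)).mul_const (‖x‖ ^ m)).div_const (c * m - κ)
  exact cauchySeq_of_le_tendsto_0'_of_ge _ 0
    (fun t₂ t₁ ht₂ ht => (dist_eq_norm _ _).trans_le (est x hx t₁ t₂ ht₂ ht)) hbound_tendsto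

/-- **Cauchy estimate for the wave-operator limit.**
If `X, X₀` are `κ`-Lipschitz vector fields with complete flows `U, U₀`, the difference
`X - X₀` is bounded by `c₀‖z‖^m` with `c m > κ`, and the flow `U₀` contracts exponentially
on a set `E`, then `t ↦ U(-t)(U₀(t)x)` satisfies the stated Cauchy estimate for
`t₁ ≥ t₂ ≥ 0`, and in particular converges as `t → ∞` for each `x ∈ E`. -/
theorem wave_operator_cauchy_estimate {N : ℕ}
    (X X₀ : EuclideanSpace ℝ (Fin N) → EuclideanSpace ℝ (Fin N))
    (κ : ℝ) (hκ : 0 < κ)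
    (hXlip : ∀ z w : EuclideanSpace ℝ (Fin N), ‖X z - X w‖ ≤ κ * ‖z - w‖)
    (hX₀lip : ∀ z w : EuclideanSpace ℝ (Fin N), ‖X₀ z - X₀ w‖ ≤ κ * ‖z - w‖)
    (U U₀ : ℝ → EuclideanSpace ℝ (Fin N) → EuclideanSpace ℝ (Fin N))
    (hU0 : ∀ x, U 0 x = x)
    (hUflow : ∀ x t, HasDerivAt (fun s => U s x) (X (U t x)) t)
    (hU₀0 : ∀ x, U₀ 0 x = x)
    (hU₀flow : ∀ x t, HasDerivAt (fun s => U₀ s x) (X₀ (U₀ t x)) t)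
    (c₀ C c : ℝ) (hc₀ : 0 < c₀) (hC : 0 < C) (hc : 0 < c)
    (m : ℕ) (hcm : κ < c * m)
    (E : Set (EuclideanSpace ℝ (Fin N)))
    (hdiff : ∀ z : EuclideanSpace ℝ (Fin N), ‖X z - X₀ z‖ ≤ c₀ * ‖z‖ ^ m)
    (hdecay : ∀ x ∈ E, ∀ t : ℝ, 0 ≤ t → ‖U₀ t x‖ ≤ C * Real.exp (-c * t) * ‖x‖) :
    (∀ x ∈ E, ∀ t₁ t₂ : ℝ, 0 ≤ t₂ → t₂ ≤ t₁ →
      ‖U (-t₁) (U₀ t₁ x) - U (-t₂) (U₀ t₂ x)‖ ≤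
        c₀ * C ^ m * Real.exp (-(c * m - κ) * t₂) * ‖x‖ ^ m / (c * m - κ)) ∧
    (∀ x ∈ E, ∃ L : EuclideanSpace ℝ (Fin N),
      Tendsto (fun t => U (-t) (U₀ t x)) atTop (nhds L)) :=
  wave_operator_cauchy_estimate_general X X₀ κ hκ hXlip U U₀ hU0 hUflow hU₀flow c₀ C c hc₀ hC m hcm
    E hdiff hdecay
end

section
/- Let 𝒪₁ ⊆ ℝ^d be open, let W be a smooth vector field on 𝒪₁, and let ρ : 𝒪₁ → ℝ be smooth, such that for some point q ∈ 𝒪₁ one has W(q) = 0, Wρ ≥ 0 on 𝒪₁, and Wρ > 0 on 𝒪₁ \ {q} (where Wρ denotes the derivative of ρ along W). Let 𝒪 ⊆ 𝒪₁ be an open set whose closure is compact and contained in 𝒪₁. If γ : [0,T) → 𝒪 (with T ∈ (0,∞]) is an integral curve of W (γ'(t) = W(γ(t)) for all t) which admits no extension to an integral curve on a strictly larger interval [0,T̃) with image in 𝒪, then either T = ∞ and lim_{t→∞} γ(t) = q, or for every compact K ⊆ 𝒪 there is T₀ < T such that γ(t) ∉ K for all t ∈ (T₀, T). -/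
/-!
Along an integral curve `γ` the function `ρ ∘ γ` has derivative `Wρ (γ t) ≥ 0`, and `γ` is
Lipschitz because `W` is bounded on the compact set `closure 𝒪`.

If `T = ∞`, then `ρ ∘ γ` is monotone and bounded, hence convergent, and its derivative
`Wρ ∘ γ` is uniformly continuous; by Barbalat's lemma `Wρ (γ t) → 0`, and since `Wρ` is
bounded below by a positive constant on `closure 𝒪` minus any neighbourhood of `q`, this
forces `γ t → q`.

If `T < ∞` and `γ` keeps returning to a compact `K ⊆ 𝒪`, then the Lipschitz curve `γ` has a
limit `L ∈ K` at `T`, and continuing `γ` by the local solution through `L` at time `T` gives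
an extension to a larger interval, contradicting maximality.
-/

open Filter Set Topology

theorem MonotoneOn.exists_tendsto_atTop_of_bddAbove {α β : Type*} [LinearOrder α]
    [ConditionallyCompleteLinearOrder β] [TopologicalSpace β] [OrderTopology β]
    {f : α → β} {a : α} (hf : MonotoneOn f (Ici a)) (hbdd : BddAbove (f '' Ici a)) :
    ∃ l, Tendsto f atTop (𝓝 l) := by
  have hmono : Monotone fun t => f (max a t) := fun s t hst =>
    hf (le_max_left a s) (le_max_left a t) (max_le_max le_rfl hst)
  obtain ⟨b, hb⟩ := hbdd
  refine ⟨_, (tendsto_atTop_ciSup hmono ⟨b, ?_⟩).congr' ?_⟩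
  · exact forall_mem_range.2 fun t => hb (mem_image_of_mem f (le_max_left a t))
  · filter_upwards [eventually_ge_atTop a] with t ht
    rw [max_eq_right ht]

theorem tendsto_atTop_zero_of_hasDerivAt_of_uniformContinuousOn {f g : ℝ → ℝ} {a l : ℝ}
    (hf : ∀ t ∈ Ici a, HasDerivAt f (g t) t) (hfl : Tendsto f atTop (𝓝 l))
    (hg : UniformContinuousOn g (Ici a)) : Tendsto g atTop (𝓝 0) := by
  rw [Metric.tendsto_atTop]
  intro ε hε
  obtain ⟨δ, hδ, hgδ⟩ := Metric.uniformContinuousOn_iff.1 hg (ε / 2) (half_pos hε)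
  have hincr : Tendsto (fun t => f (t + δ / 2) - f t) atTop (𝓝 0) := by
    simpa using (hfl.comp (tendsto_atTop_add_const_right _ _ tendsto_id)).sub hfl
  obtain ⟨N, hN⟩ := eventually_atTop.1 <|
    (Metric.tendsto_nhds.1 hincr (ε / 2 * (δ / 2)) (by positivity)).and (eventually_ge_atTop a)
  refine ⟨N, fun t ht => ?_⟩
  obtain ⟨hsmall, hat⟩ := hN t ht
  obtain ⟨c, hc, hgc⟩ := exists_hasDerivAt_eq_slope f g (by linarith : t < t + δ / 2)
    (fun x hx => (hf x (hat.trans hx.1)).continuousAt.continuousWithinAt)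
    (fun x hx => hf x (hat.trans hx.1.le))
  have hgc_small : |g c| < ε / 2 := by
    rw [hgc, add_sub_cancel_left, abs_div, abs_of_pos (half_pos hδ), div_lt_iff₀ (half_pos hδ)]
    simpa using hsmall
  have hgtc : dist (g t) (g c) < ε / 2 := by
    refine hgδ t hat c (hat.trans hc.1.le) ?_
    rw [Real.dist_eq, abs_sub_comm, abs_of_pos (by linarith [hc.1])]
    linarith [hc.2]
  rw [Real.dist_eq] at hgtc
  rw [dist_zero_right, Real.norm_eq_abs]
  linarith [abs_sub_abs_le_abs_sub (g t) (g c)]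

theorem IsCompact.tendsto_nhds_of_pos_of_tendsto_comp_zero {X ι : Type*} [TopologicalSpace X]
    {C : Set X} (hC : IsCompact C) {V : X → ℝ} (hV : ContinuousOn V C) {q : X}
    (hpos : ∀ p ∈ C, p ≠ q → 0 < V p) {l : Filter ι} {γ : ι → X} (hγC : ∀ᶠ i in l, γ i ∈ C)
    (hVγ : Tendsto (V ∘ γ) l (𝓝 0)) : Tendsto γ l (𝓝 q) := by
  refine tendsto_nhds.2 fun N hN hqN => ?_
  obtain ⟨c, hc, hcV⟩ := (hC.diff hN).exists_forall_le' (hV.mono sdiff_subset)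
    fun p hp => hpos p hp.1 (ne_of_mem_of_not_mem hqN hp.2).symm
  filter_upwards [hγC, hVγ.eventually (gt_mem_nhds hc)] with i hiC hic
  by_contra hiN
  exact (hcV _ ⟨hiC, hiN⟩).not_gt hic

theorem UniformContinuousOn.exists_tendsto_nhdsWithin {α β : Type*} [UniformSpace α]
    [UniformSpace β] [CompleteSpace β] {f : α → β} {s : Set α} (hf : UniformContinuousOn f s)
    {a : α} (ha : a ∈ closure s) : ∃ L, Tendsto f (𝓝[s] a) (𝓝 L) := by
  have := mem_closure_iff_nhdsWithin_neBot.1 ha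
  exact cauchy_map_iff_exists_tendsto.1 <|
    (cauchy_nhds.mono nhdsWithin_le_nhds).map_of_le hf inf_le_right

theorem hasDerivWithinAt_Iic_of_eventually_hasDerivAt {E : Type*} [NormedAddCommGroup E]
    [NormedSpace ℝ E] {f f' : ℝ → E} {a : ℝ} {e : E}
    (hf : ∀ᶠ t in 𝓝[<] a, HasDerivAt f (f' t) t) (hfa : Tendsto f (𝓝[<] a) (𝓝 (f a)))
    (hf' : Tendsto f' (𝓝[<] a) (𝓝 e)) : HasDerivWithinAt f e (Iic a) a := by
  obtain ⟨s, hs, hfs⟩ := hf.exists_mem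
  refine hasDerivWithinAt_Iic_of_tendsto_deriv (s := s ∩ Iio a)
    (fun t ht => (hfs t ht.1).differentiableAt.differentiableWithinAt)
    (hfa.mono_left (nhdsWithin_mono _ inter_subset_right))
    (inter_mem hs self_mem_nhdsWithin) (hf'.congr' ?_)
  filter_upwards [hs] with t ht
  exact (hfs t ht).deriv.symm

section IntegralCurves

variable {E : Type*} [NormedAddCommGroup E] [NormedSpace ℝ E] {W : E → E} {γ : ℝ → E}

theorem IsCompact.exists_lipschitzOnWith_of_hasDerivAt {C : Set E} (hC : IsCompact C)
    (hW : ContinuousOn W C) {s : Set ℝ} (hs : Convex ℝ s)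
    (hγ : ∀ t ∈ s, γ t ∈ C ∧ HasDerivAt γ (W (γ t)) t) : ∃ M, LipschitzOnWith M γ s := by
  obtain ⟨M, hM⟩ := hC.bddAbove_image hW.nnnorm
  exact ⟨M, hs.lipschitzOnWith_of_nnnorm_hasDerivWithin_le
    (fun t ht => (hγ t ht).2.hasDerivWithinAt)
    fun t ht => hM (mem_image_of_mem _ (hγ t ht).1)⟩

theorem exists_hasDerivAt_extension_of_tendsto_nhdsLT [CompleteSpace E] {O : Set E} {L : E}
    {T : ℝ} (hW : ContDiffAt ℝ 1 W L) (hO : O ∈ 𝓝 L) (hL : Tendsto γ (𝓝[<] T) (𝓝 L))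
    (hγ : ∀ᶠ t in 𝓝[<] T, HasDerivAt γ (W (γ t)) t) :
    ∃ e > 0, ∃ γ' : ℝ → E, EqOn γ' γ (Iio T) ∧
      ∀ t ∈ Ico T (T + e), γ' t ∈ O ∧ HasDerivAt γ' (W (γ' t)) t := by
  obtain ⟨σ, hσT, ε, hε, hσ⟩ :=
    hW.exists_forall_mem_closedBall_exists_eq_forall_mem_Ioo_hasDerivAt₀ T
  have hσO : ∀ᶠ t in 𝓝 T, σ t ∈ O ∧ HasDerivAt σ (W (σ t)) t := by
    have hσcont := (hσ T ⟨by linarith, by linarith⟩).continuousAt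
    rw [ContinuousAt, hσT] at hσcont
    filter_upwards [hσcont hO, Ioo_mem_nhds (by linarith : T - ε < T) (by linarith : T < T + ε)]
      with t htO htε
    exact ⟨htO, hσ t htε⟩
  obtain ⟨e, he, hσe⟩ := Metric.eventually_nhds_iff_ball.1 hσO
  set γ' : ℝ → E := fun t => if t < T then γ t else σ t
  have hγ'γ : EqOn γ' γ (Iio T) := fun t ht => if_pos ht
  have hγ'σ : EqOn γ' σ (Ici T) := fun t ht => if_neg (not_lt.2 ht)
  have hmem : ∀ t ∈ Ico T (T + e), t ∈ Metric.ball T e := fun t ht => by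
    rw [Metric.mem_ball, Real.dist_eq, abs_of_nonneg (by linarith [ht.1])]
    linarith [ht.2]
  refine ⟨e, he, γ', hγ'γ, fun t ht => ⟨hγ'σ ht.1 ▸ (hσe t (hmem t ht)).1, ?_⟩⟩
  rcases eq_or_lt_of_le ht.1 with rfl | hTt
  · have hγ'L : γ' T = L := (hγ'σ (mem_Ici.2 le_rfl)).trans hσT
    have hleft_eq : γ' =ᶠ[𝓝[<] T] γ := eventuallyEq_nhdsWithin_of_eqOn hγ'γ
    have hγ'lim : Tendsto γ' (𝓝[<] T) (𝓝 (γ' T)) := hγ'L ▸ hL.congr' hleft_eq.symm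
    have hleft : HasDerivWithinAt γ' (W L) (Iic T) T := by
      refine hasDerivWithinAt_Iic_of_eventually_hasDerivAt ?_ hγ'lim
        ((hW.continuousAt.tendsto.comp hL).congr' (hleft_eq.fun_comp W).symm)
      filter_upwards [hγ, self_mem_nhdsWithin] with s hs hst
      have hloc : γ' =ᶠ[𝓝 s] γ := hγ'γ.eventuallyEq_of_mem (Iio_mem_nhds hst)
      rw [Function.comp_apply, hloc.eq_of_nhds]
      exact hs.congr_of_eventuallyEq hloc
    have hright : HasDerivWithinAt γ' (W L) (Ici T) T :=
      (hσT ▸ (hσe T (Metric.mem_ball_self he)).2).hasDerivWithinAt.congr hγ'σ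
        (hγ'σ (mem_Ici.2 le_rfl))
    simpa [hγ'L, Iic_union_Ici] using hleft.union hright
  · have hloc : γ' =ᶠ[𝓝 t] σ := hγ'σ.eventuallyEq_of_mem (Ici_mem_nhds hTt)
    exact hloc.eq_of_nhds ▸ (hσe t (hmem t ht)).2.congr_of_eventuallyEq hloc

theorem exists_integralCurve_extension_of_frequently_mem [CompleteSpace E] {C U O K : Set E}
    (hC : IsCompact C) (hU : IsOpen U) (hCU : C ⊆ U) (hW : ContDiffOn ℝ 1 W U)
    (hO : IsOpen O) (hOC : O ⊆ C) (hK : IsClosed K) (hKO : K ⊆ O) {T : ℝ} (hT : 0 < T)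
    (hγ : ∀ t ∈ Ico 0 T, γ t ∈ O ∧ HasDerivAt γ (W (γ t)) t)
    (hreturns : ∃ᶠ t in 𝓝[<] T, γ t ∈ K) :
    ∃ T' > T, ∃ γ' : ℝ → E, EqOn γ' γ (Ico 0 T) ∧
      ∀ t ∈ Ico 0 T', γ' t ∈ O ∧ HasDerivAt γ' (W (γ' t)) t := by
  obtain ⟨M, hM⟩ := hC.exists_lipschitzOnWith_of_hasDerivAt (hW.continuousOn.mono hCU)
    (convex_Ico 0 T) fun t ht => ⟨hOC (hγ t ht).1, (hγ t ht).2⟩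
  obtain ⟨L, hL⟩ := hM.uniformContinuousOn.exists_tendsto_nhdsWithin
    (by rw [closure_Ico hT.ne]; exact right_mem_Icc.2 hT.le)
  rw [nhdsWithin_Ico_eq_nhdsLT hT] at hL
  have hLO : L ∈ O := hKO (hK.mem_of_frequently_of_tendsto hreturns hL)
  have hsol : ∀ᶠ t in 𝓝[<] T, HasDerivAt γ (W (γ t)) t := by
    filter_upwards [Ioo_mem_nhdsLT hT] with t ht
    exact (hγ t ⟨ht.1.le, ht.2⟩).2
  obtain ⟨e, he, γ', hγ'γ, hγ'⟩ := exists_hasDerivAt_extension_of_tendsto_nhdsLT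
    (hW.contDiffAt (hU.mem_nhds (hCU (hOC hLO)))) (hO.mem_nhds hLO) hL hsol
  refine ⟨T + e, by linarith, γ', hγ'γ.mono Ico_subset_Iio_self, fun t ht => ?_⟩
  rcases lt_or_ge t T with htT | hTt
  · have hloc : γ' =ᶠ[𝓝 t] γ := hγ'γ.eventuallyEq_of_mem (Iio_mem_nhds htT)
    obtain ⟨htO, hderiv⟩ := hγ t ⟨ht.1, htT⟩
    exact hloc.eq_of_nhds ▸ ⟨htO, hderiv.congr_of_eventuallyEq hloc⟩
  · exact hγ' t ⟨hTt, ht.2⟩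

theorem tendsto_atTop_of_lyapunov {C U : Set E} (hC : IsCompact C) (hU : IsOpen U)
    (hCU : C ⊆ U) (hW : ContinuousOn W U) {ρ : E → ℝ} (hρ : ContDiffOn ℝ 1 ρ U) {q : E}
    (hmono : ∀ p ∈ C, 0 ≤ fderiv ℝ ρ p (W p))
    (hstrict : ∀ p ∈ C, p ≠ q → 0 < fderiv ℝ ρ p (W p))
    (hγ : ∀ t ∈ Ici (0 : ℝ), γ t ∈ C ∧ HasDerivAt γ (W (γ t)) t) :
    Tendsto γ atTop (𝓝 q) := by
  set V : E → ℝ := fun p => fderiv ℝ ρ p (W p)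
  have hV : ContinuousOn V C :=
    ((hρ.continuousOn_fderiv_of_isOpen hU le_rfl).clm_apply hW).mono hCU
  have hργ : ∀ t ∈ Ici (0 : ℝ), HasDerivAt (ρ ∘ γ) (V (γ t)) t := fun t ht =>
    (((hρ.contDiffAt (hU.mem_nhds (hCU (hγ t ht).1))).differentiableAt one_ne_zero).hasFDerivAt
      ).comp_hasDerivAt t (hγ t ht).2
  have hργ_mono : MonotoneOn (ρ ∘ γ) (Ici 0) :=
    monotoneOn_of_hasDerivWithinAt_nonneg (convex_Ici 0)
      (fun t ht => (hργ t ht).continuousAt.continuousWithinAt)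
      (fun t ht => (hργ t (interior_subset ht)).hasDerivWithinAt)
      fun t ht => hmono _ (hγ t (interior_subset ht)).1
  have hργ_bdd : BddAbove ((ρ ∘ γ) '' Ici 0) :=
    (hC.bddAbove_image (hρ.continuousOn.mono hCU)).mono <| by
      rintro _ ⟨t, ht, rfl⟩
      exact mem_image_of_mem ρ (hγ t ht).1
  obtain ⟨l, hl⟩ := hργ_mono.exists_tendsto_atTop_of_bddAbove hργ_bdd
  obtain ⟨M, hM⟩ := hC.exists_lipschitzOnWith_of_hasDerivAt (hW.mono hCU) (convex_Ici 0) hγ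
  have hVγ : UniformContinuousOn (V ∘ γ) (Ici 0) :=
    (hC.uniformContinuousOn_of_continuous hV).comp hM.uniformContinuousOn fun t ht => (hγ t ht).1
  exact hC.tendsto_nhds_of_pos_of_tendsto_comp_zero hV hstrict
    ((eventually_ge_atTop 0).mono fun t ht => (hγ t ht).1)
    (tendsto_atTop_zero_of_hasDerivAt_of_uniformContinuousOn hργ hl hVγ)

end IntegralCurves

theorem maximal_integral_curve_dichotomy_general {d : ℕ}
    (𝒪₁ 𝒪 : Set (EuclideanSpace ℝ (Fin d)))
    (h𝒪₁open : IsOpen 𝒪₁) (h𝒪open : IsOpen 𝒪)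
    (h𝒪cpt : IsCompact (closure 𝒪)) (h𝒪sub : closure 𝒪 ⊆ 𝒪₁)
    (W : EuclideanSpace ℝ (Fin d) → EuclideanSpace ℝ (Fin d))
    (hW : ContDiffOn ℝ (⊤ : ℕ∞) W 𝒪₁)
    (ρ : EuclideanSpace ℝ (Fin d) → ℝ)
    (hρ : ContDiffOn ℝ (⊤ : ℕ∞) ρ 𝒪₁)
    (q : EuclideanSpace ℝ (Fin d))
    (hmono : ∀ p ∈ 𝒪₁, 0 ≤ fderiv ℝ ρ p (W p))
    (hstrict : ∀ p ∈ 𝒪₁, p ≠ q → 0 < fderiv ℝ ρ p (W p))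
    (T : EReal) (hT : 0 < T)
    (γ : ℝ → EuclideanSpace ℝ (Fin d))
    (hγ𝒪 : ∀ t : ℝ, 0 ≤ t → (t : EReal) < T → γ t ∈ 𝒪)
    (hγflow : ∀ t : ℝ, 0 ≤ t → (t : EReal) < T → HasDerivAt γ (W (γ t)) t)
    (hmax : ¬ ∃ T' : EReal, T < T' ∧ ∃ γ' : ℝ → EuclideanSpace ℝ (Fin d),
      (∀ t : ℝ, 0 ≤ t → (t : EReal) < T' → γ' t ∈ 𝒪 ∧ HasDerivAt γ' (W (γ' t)) t) ∧
      (∀ t : ℝ, 0 ≤ t → (t : EReal) < T → γ' t = γ t)) :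
    (T = ⊤ ∧ Tendsto γ atTop (nhds q)) ∨
    (∀ K : Set (EuclideanSpace ℝ (Fin d)), K ⊆ 𝒪 → IsCompact K →
      ∃ T₀ : ℝ, (T₀ : EReal) < T ∧ ∀ t : ℝ, T₀ < t → (t : EReal) < T → γ t ∉ K) := by
  have hW₁ : ContDiffOn ℝ 1 W 𝒪₁ := hW.of_le (by exact_mod_cast le_top)
  induction T using EReal.rec with
  | bot => exact absurd hT not_lt_bot
  | top =>
    refine Or.inl ⟨rfl, tendsto_atTop_of_lyapunov h𝒪cpt h𝒪₁open h𝒪sub hW₁.continuousOn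
      (hρ.of_le (by exact_mod_cast le_top)) (fun p hp => hmono p (h𝒪sub hp))
      (fun p hp => hstrict p (h𝒪sub hp)) fun t ht => ?_⟩
    exact ⟨subset_closure (hγ𝒪 t ht (EReal.coe_lt_top t)), hγflow t ht (EReal.coe_lt_top t)⟩
  | coe T =>
    refine Or.inr fun K hK𝒪 hK => ?_
    by_contra! hback
    have hreturns : ∃ᶠ t in 𝓝[<] T, γ t ∈ K :=
      (nhdsLT_basis T).frequently_iff.2 fun T₀ hT₀ => by
        obtain ⟨t, hT₀t, htT, htK⟩ := hback T₀ (by exact_mod_cast hT₀)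
        exact ⟨t, ⟨hT₀t, by exact_mod_cast htT⟩, htK⟩
    obtain ⟨T', hTT', γ', hγ'γ, hγ'⟩ := exists_integralCurve_extension_of_frequently_mem h𝒪cpt
      h𝒪₁open h𝒪sub hW₁ h𝒪open subset_closure hK.isClosed hK𝒪 (by exact_mod_cast hT)
      (fun t ht => ⟨hγ𝒪 t ht.1 (by exact_mod_cast ht.2), hγflow t ht.1 (by exact_mod_cast ht.2)⟩)
      hreturns
    refine hmax ⟨T', by exact_mod_cast hTT', γ', fun t ht htT' => ?_, fun t ht htT => ?_⟩
    · exact hγ' t ⟨ht, by exact_mod_cast htT'⟩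
    · exact hγ'γ ⟨ht, by exact_mod_cast htT⟩

/-- **Dichotomy for maximal forward integral curves near a gradient-like zero.**
Let `W` be a smooth vector field on an open set `𝒪₁ ⊆ ℝ^d`, `ρ` a smooth function with
`Wρ ≥ 0` on `𝒪₁` and `Wρ > 0` away from the unique zero `q` of `W`.  Let `𝒪` be open with
compact closure contained in `𝒪₁`.  If `γ : [0,T) → 𝒪` is a maximally forward-extended
integral curve of `W` (no extension to a strictly larger interval `[0,T')` with image in
`𝒪`), then either `T = ∞` and `γ(t) → q`, or `γ` eventually leaves every compact subset
of `𝒪`. -/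
theorem maximal_integral_curve_dichotomy {d : ℕ}
    (𝒪₁ 𝒪 : Set (EuclideanSpace ℝ (Fin d)))
    (h𝒪₁open : IsOpen 𝒪₁) (h𝒪open : IsOpen 𝒪)
    (h𝒪cpt : IsCompact (closure 𝒪)) (h𝒪sub : closure 𝒪 ⊆ 𝒪₁)
    (W : EuclideanSpace ℝ (Fin d) → EuclideanSpace ℝ (Fin d))
    (hW : ContDiffOn ℝ (⊤ : ℕ∞) W 𝒪₁)
    (ρ : EuclideanSpace ℝ (Fin d) → ℝ)
    (hρ : ContDiffOn ℝ (⊤ : ℕ∞) ρ 𝒪₁)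
    (q : EuclideanSpace ℝ (Fin d)) (hq : q ∈ 𝒪₁) (hWq : W q = 0)
    (hmono : ∀ p ∈ 𝒪₁, 0 ≤ fderiv ℝ ρ p (W p))
    (hstrict : ∀ p ∈ 𝒪₁, p ≠ q → 0 < fderiv ℝ ρ p (W p))
    (T : EReal) (hT : 0 < T)
    (γ : ℝ → EuclideanSpace ℝ (Fin d))
    (hγ𝒪 : ∀ t : ℝ, 0 ≤ t → (t : EReal) < T → γ t ∈ 𝒪)
    (hγflow : ∀ t : ℝ, 0 ≤ t → (t : EReal) < T → HasDerivAt γ (W (γ t)) t)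
    (hmax : ¬ ∃ T' : EReal, T < T' ∧ ∃ γ' : ℝ → EuclideanSpace ℝ (Fin d),
      (∀ t : ℝ, 0 ≤ t → (t : EReal) < T' → γ' t ∈ 𝒪 ∧ HasDerivAt γ' (W (γ' t)) t) ∧
      (∀ t : ℝ, 0 ≤ t → (t : EReal) < T → γ' t = γ t)) :
    (T = ⊤ ∧ Tendsto γ atTop (nhds q)) ∨
    (∀ K : Set (EuclideanSpace ℝ (Fin d)), K ⊆ 𝒪 → IsCompact K →
      ∃ T₀ : ℝ, (T₀ : EReal) < T ∧ ∀ t : ℝ, T₀ < t → (t : EReal) < T → γ t ∉ K) :=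
  maximal_integral_curve_dichotomy_general 𝒪₁ 𝒪 h𝒪₁open h𝒪open h𝒪cpt h𝒪sub W hW ρ hρ q hmono hstrict
    T hT γ hγ𝒪 hγflow hmax
end

section
/- Let r'₁,…,r'_p be negative real numbers and r''₁,…,r''_q real numbers in (0,1/2]. Then the following set of effectively resonant multiindices is finite: the union of (i) the set of pairs (k,α) with k ∈ {1,…,p}, α ∈ ℕ^p, |α| ≥ 2 and Σ_j α_j r'_j = r'_k, and (ii) the set of pairs (α,β) ∈ ℕ^q × ℕ^q with |α| + |β| ≥ 3 and Σ_j (α_j r''_j + β_j (1 − r''_j)) = 1. Moreover, in case (i) necessarily |α| ≤ |r'_k| / min_j |r'_j|, and in case (ii) necessarily |α| ≤ 1 / min_j r''_j and |β| ≤ 1. -/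
open Finset

/-- **Finiteness of effectively resonant multiindices, with explicit bounds.**
Given negative reals `r'₁, …, r'ₚ` and reals `r''₁, …, r''_q` in `(0, 1/2]`, the set of
effectively resonant multiindices of type (i) (pairs `(k, α)` with `|α| ≥ 2` and
`Σ αⱼ r'ⱼ = r'ₖ`) and of type (ii) (pairs `(α, β)` with `|α| + |β| ≥ 3` and
`Σ (αⱼ r''ⱼ + βⱼ(1 - r''ⱼ)) = 1`) are finite; moreover in case (i)
`|α| ≤ |r'ₖ| / minⱼ |r'ⱼ|`, and in case (ii) `|α| ≤ 1 / minⱼ r''ⱼ` and `|β| ≤ 1`. -/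
theorem effectively_resonant_multiindices_finite {p q : ℕ} (hp : 0 < p) (hq : 0 < q)
    (r' : Fin p → ℝ) (hr' : ∀ j, r' j < 0)
    (r'' : Fin q → ℝ) (hr'' : ∀ j, 0 < r'' j ∧ r'' j ≤ 1 / 2) :
    {x : Fin p × (Fin p → ℕ) |
        2 ≤ ∑ j, x.2 j ∧ ∑ j, (x.2 j : ℝ) * r' j = r' x.1}.Finite ∧
    {x : (Fin q → ℕ) × (Fin q → ℕ) |
        3 ≤ ∑ j, (x.1 j + x.2 j) ∧
        ∑ j, ((x.1 j : ℝ) * r'' j + (x.2 j : ℝ) * (1 - r'' j)) = 1}.Finite ∧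
    (∀ k : Fin p, ∀ α : Fin p → ℕ, 2 ≤ ∑ j, α j →
      ∑ j, (α j : ℝ) * r' j = r' k →
      ((∑ j, α j : ℕ) : ℝ) ≤ |r' k| / ⨅ j, |r' j|) ∧
    (∀ α β : Fin q → ℕ, 3 ≤ ∑ j, (α j + β j) →
      ∑ j, ((α j : ℝ) * r'' j + (β j : ℝ) * (1 - r'' j)) = 1 →
      ((∑ j, α j : ℕ) : ℝ) ≤ 1 / ⨅ j, r'' j ∧ ∑ j, β j ≤ 1) := by
  haveI : Nonempty (Fin p) := Fin.pos_iff_nonempty.mp hp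
  haveI : Nonempty (Fin q) := Fin.pos_iff_nonempty.mp hq
  set m := ⨅ j, |r' j| with hm_def
  set n := ⨅ j, r'' j with hn_def
  have hm : 0 < m := by
    obtain ⟨j0, hj0⟩ := Finite.exists_min fun j => |r' j|
    have : m = |r' j0| :=
      le_antisymm (ciInf_le (Set.finite_range _).bddBelow j0) (le_ciInf hj0)
    rw [this]; exact abs_pos.2 (hr' j0).ne
  have hn : 0 < n := by
    obtain ⟨j0, hj0⟩ := Finite.exists_min r''
    have : n = r'' j0 :=
      le_antisymm (ciInf_le (Set.finite_range _).bddBelow j0) (le_ciInf hj0)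
    rw [this]; exact (hr'' j0).1
  -- Bound (i)
  have B1 : ∀ k : Fin p, ∀ α : Fin p → ℕ, ∑ j, (α j : ℝ) * r' j = r' k →
      ((∑ j, α j : ℕ) : ℝ) ≤ |r' k| / m := by
    intro k α h
    rw [le_div_iff₀ hm]
    have key : |r' k| = ∑ j, (α j : ℝ) * |r' j| := by
      rw [abs_of_neg (hr' k), ← h, ← Finset.sum_neg_distrib]
      exact Finset.sum_congr rfl fun j _ => by rw [abs_of_neg (hr' j)]; ring
    rw [key, Nat.cast_sum, Finset.sum_mul]
    refine Finset.sum_le_sum fun j _ => ?_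
    exact mul_le_mul_of_nonneg_left (ciInf_le (Set.finite_range _).bddBelow j)
      (Nat.cast_nonneg _)
  -- Bound (ii)
  have B2 : ∀ α β : Fin q → ℕ, 3 ≤ ∑ j, (α j + β j) →
      ∑ j, ((α j : ℝ) * r'' j + (β j : ℝ) * (1 - r'' j)) = 1 →
      ((∑ j, α j : ℕ) : ℝ) ≤ 1 / n ∧ ∑ j, β j ≤ 1 := by
    intro α β h3 hsum
    have hA : (0:ℝ) ≤ ∑ j, (α j : ℝ) * r'' j :=
      Finset.sum_nonneg fun j _ => mul_nonneg (Nat.cast_nonneg _) (hr'' j).1.le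
    have hB : ((∑ j, β j : ℕ) : ℝ) * (1/2) ≤ ∑ j, (β j : ℝ) * (1 - r'' j) := by
      rw [Nat.cast_sum, Finset.sum_mul]
      refine Finset.sum_le_sum fun j _ => ?_
      have : (1:ℝ)/2 ≤ 1 - r'' j := by linarith [(hr'' j).2]
      exact mul_le_mul_of_nonneg_left this (Nat.cast_nonneg _)
    have hAm : ((∑ j, α j : ℕ) : ℝ) * n ≤ ∑ j, (α j : ℝ) * r'' j := by
      rw [Nat.cast_sum, Finset.sum_mul]
      refine Finset.sum_le_sum fun j _ => ?_
      exact mul_le_mul_of_nonneg_left (ciInf_le (Set.finite_range _).bddBelow j)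
        (Nat.cast_nonneg _)
    have hsplit : ∑ j, (α j : ℝ) * r'' j + ∑ j, (β j : ℝ) * (1 - r'' j) = 1 := by
      rw [← Finset.sum_add_distrib]; exact hsum
    constructor
    · rw [le_div_iff₀ hn]; linarith [Finset.sum_nonneg
        (fun j (_ : j ∈ Finset.univ) => mul_nonneg (Nat.cast_nonneg (β j))
          (by linarith [(hr'' j).2] : (0:ℝ) ≤ 1 - r'' j))]
    · by_contra hβ
      have hβ2 : 2 ≤ ∑ j, β j := by omega
      -- then β-part ≥ 1, so α-part ≤ 0, so α = 0
      have h1 : (1:ℝ) ≤ ∑ j, (β j : ℝ) * (1 - r'' j) := by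
        have : (2:ℝ) ≤ ((∑ j, β j : ℕ) : ℝ) := by exact_mod_cast hβ2
        nlinarith
      have hA0 : ∑ j, (α j : ℝ) * r'' j = 0 := by linarith
      have hα0 : ∀ j, α j = 0 := by
        intro j
        by_contra hj
        have h1j : 1 ≤ α j := Nat.one_le_iff_ne_zero.mpr hj
        have : 0 < ∑ i, (α i : ℝ) * r'' i := by
          have hle : (α j : ℝ) * r'' j ≤ ∑ i, (α i : ℝ) * r'' i :=
            Finset.single_le_sum (f := fun i => (α i : ℝ) * r'' i)
              (fun i _ => mul_nonneg (Nat.cast_nonneg _) (hr'' i).1.le)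
              (Finset.mem_univ j)
          have : 0 < (α j : ℝ) * r'' j := by
            have : (1:ℝ) ≤ (α j : ℝ) := by exact_mod_cast h1j
            nlinarith [(hr'' j).1]
          linarith
        linarith
      have hαsum : ∑ j, α j = 0 := Finset.sum_eq_zero fun j _ => hα0 j
      have hβ3 : 3 ≤ ∑ j, β j := by
        have := Finset.sum_add_distrib (s := (Finset.univ : Finset (Fin q)))
          (f := α) (g := β)
        omega
      have : (3:ℝ) ≤ ((∑ j, β j : ℕ) : ℝ) := by exact_mod_cast hβ3
      nlinarith
  refine ⟨?_, ?_, fun k α _ h => B1 k α h, B2⟩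
  · -- finiteness of set (i)
    obtain ⟨k0, hk0⟩ := Finite.exists_max fun k => |r' k|
    set N := ⌈|r' k0| / m⌉₊ with hN
    refine Set.Finite.subset ((Set.finite_univ (α := Fin p)).prod
      (Set.finite_Icc (0 : Fin p → ℕ) (fun _ => N))) ?_
    rintro ⟨k, α⟩ ⟨-, h2⟩
    refine ⟨Set.mem_univ _, ?_⟩
    simp only [Set.mem_Icc, Pi.le_def]
    refine ⟨fun j => Nat.zero_le _, fun j => ?_⟩
    have h4 : ((∑ i, α i : ℕ) : ℝ) ≤ |r' k0| / m :=
      (B1 k α h2).trans ((div_le_div_iff_of_pos_right hm).mpr (hk0 k))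
    have h5 : α j ≤ ∑ i, α i :=
      Finset.single_le_sum (fun i _ => Nat.zero_le _) (Finset.mem_univ j)
    have h6 : ((∑ i, α i : ℕ) : ℝ) ≤ (N : ℝ) := h4.trans (Nat.le_ceil _)
    exact le_trans h5 (by exact_mod_cast h6)
  · -- finiteness of set (ii)
    set N := ⌈1 / n⌉₊ with hN
    refine Set.Finite.subset ((Set.finite_Icc (0 : Fin q → ℕ) (fun _ => N)).prod
      (Set.finite_Icc (0 : Fin q → ℕ) (fun _ => 1))) ?_
    rintro ⟨α, β⟩ ⟨h3, hsum⟩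
    obtain ⟨hα, hβ⟩ := B2 α β h3 hsum
    constructor
    · simp only [Set.mem_Icc, Pi.le_def]
      refine ⟨fun j => Nat.zero_le _, fun j => ?_⟩
      have h5 : α j ≤ ∑ i, α i :=
        Finset.single_le_sum (fun i _ => Nat.zero_le _) (Finset.mem_univ j)
      have h6 : ((∑ i, α i : ℕ) : ℝ) ≤ (N : ℝ) := hα.trans (Nat.le_ceil _)
      exact le_trans h5 (by exact_mod_cast h6)
    · simp only [Set.mem_Icc, Pi.le_def]
      refine ⟨fun j => Nat.zero_le _, fun j => ?_⟩
      exact le_trans (Finset.single_le_sum (fun i _ => Nat.zero_le _)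
        (Finset.mem_univ j)) hβ
end

section
/- Let s ≤ m, let r_s,…,r_{m−1} be positive real numbers, and for each j ∈ {s,…,m−1} let 𝒫_j be a real polynomial in the variables z_s,…,z_{j−1} that is weighted homogeneous of degree r_j, i.e. 𝒫_j(λ^{r_s} z_s,…,λ^{r_{j−1}} z_{j−1}) = λ^{r_j} 𝒫_j(z_s,…,z_{j−1}) for all λ > 0; let 𝒫₀ be a real polynomial in z_s,…,z_{m−1} that is weighted homogeneous of degree 1 in the same sense. Consider the vector field V = x ∂_x + Σ_{j=s}^{m−1} (r_j y_j + 𝒫_j(y_s,…,y_{j−1})) ∂_{y_j} on (0,∞)_x × ℝ^{m−s}_y. Then there exist real polynomials 𝒫♯_j in the variables (Z_s,…,Z_{j−1}, t), for j = s,…,m−1, and a real polynomial 𝒫♯₀ in (Z_s,…,Z_{m−1}, t), such that the functions Y_j, defined recursively by Y_j(x,y) = y_j x^{−r_j} − 𝒫♯_j(Y_s(x,y),…,Y_{j−1}(x,y), log x), satisfy V Y_j = 0 on (0,∞) × ℝ^{m−s} for every j, and V(𝒫♯₀(Y_s,…,Y_{m−1}, log x)) = x^{−1} 𝒫₀(y_s,…,y_{m−1})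 on (0,∞) × ℝ^{m−s}. -/
/-!
In the coordinates `t = log x`, `z_l = y_l x^{-ρ_l}` weighted homogeneity turns `V` into the
polynomial vector field `∂_t + Σ_l P_l(z) ∂_{z_l}`, which is triangular. Its flow is polynomial
in `t`: `z_i = Y_i + Q_i(Y, t)` with `Q_i = ∫ P_i(Y + Q(Y, t)) dt`, and inverting this triangular
substitution expresses the first integrals `Y_i` as polynomials in `(t, z)`. Likewise
`Q₀ = ∫ P₀(Y + Q(Y, t)) dt` satisfies `V Q₀ = P₀(z) = x⁻¹ P₀(y)`.
-/

open Finset MvPolynomial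

theorem Derivation.map_mvPolynomial_aeval {R A M σ : Type*} [CommSemiring R] [CommSemiring A]
    [Algebra R A] [AddCommMonoid M] [Module A M] [Module R M] [Fintype σ]
    (D : Derivation R A M) (f : σ → A) (p : MvPolynomial σ R) :
    D (aeval f p) = ∑ i, aeval f (pderiv i p) • D (f i) := by
  classical
  induction p using MvPolynomial.induction_on with
  | C r => simp
  | add p q hp hq => simp [hp, hq, add_smul, sum_add_distrib]
  | mul_X p i hp =>
    simp [hp, pderiv_X, Pi.single_apply, add_smul, sum_add_distrib, smul_sum, smul_smul,
      mul_comm, apply_ite (aeval f), ite_smul, add_comm]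

theorem MvPolynomial.hasFDerivAt_eval {σ E : Type*} [Fintype σ] [NormedAddCommGroup E]
    [NormedSpace ℝ E] {u : E → σ → ℝ} {D : σ → E →L[ℝ] ℝ} {a : E}
    (hu : ∀ i, HasFDerivAt (fun e => u e i) (D i) a) (p : MvPolynomial σ ℝ) :
    HasFDerivAt (fun e => eval (u e) p) (∑ i, eval (u a) (pderiv i p) • D i) a := by
  classical
  induction p using MvPolynomial.induction_on with
  | C r => simpa using hasFDerivAt_const r a
  | add p q hp hq =>
    simp only [map_add]
    exact (hp.add hq).congr_fderiv (by simp [add_smul, sum_add_distrib])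
  | mul_X p i hp =>
    simp only [map_mul, eval_X]
    refine (hp.mul (hu i)).congr_fderiv ?_
    simp [pderiv_X, Pi.single_apply, add_smul, sum_add_distrib, smul_sum, smul_smul,
      apply_ite (eval (u a)), ite_smul]

theorem MvPolynomial.eval_mul_rpow_neg_of_homogeneous {σ : Type*} {ρ : σ → ℝ} {d : ℝ}
    {p : MvPolynomial σ ℝ}
    (hp : ∀ c : ℝ, 0 < c → ∀ z : σ → ℝ, eval (fun l => c ^ ρ l * z l) p = c ^ d * eval z p)
    {x : ℝ} (hx : 0 < x) (y : σ → ℝ) :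
    eval (fun l => y l * x ^ (-ρ l)) p = x ^ (-d) * eval y p := by
  have hy : (fun l => x ^ ρ l * (y l * x ^ (-ρ l))) = y := by
    funext l
    rw [mul_left_comm, ← Real.rpow_add hx, add_neg_cancel, Real.rpow_zero, mul_one]
  have := hp x hx fun l => y l * x ^ (-ρ l)
  rw [hy] at this
  rw [this, ← mul_assoc, ← Real.rpow_add hx, neg_add_cancel, Real.rpow_zero, one_mul]

section Antideriv

variable {R σ : Type*} [Field R] [CharZero R]

noncomputable def MvPolynomial.antideriv (i : σ) (p : MvPolynomial σ R) : MvPolynomial σ R :=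
  ∑ m ∈ p.support, monomial (m + Finsupp.single i 1) (p.coeff m / (m i + 1))

theorem MvPolynomial.pderiv_antideriv (i : σ) (p : MvPolynomial σ R) :
    pderiv i (antideriv i p) = p := by
  rw [antideriv, map_sum]
  conv_rhs => rw [p.as_sum]
  refine sum_congr rfl fun m _ => ?_
  rw [pderiv_monomial, add_tsub_cancel_right]
  congr 1
  simp only [Finsupp.coe_add, Pi.add_apply, Finsupp.single_eq_same, Nat.cast_add, Nat.cast_one]
  field_simp

theorem MvPolynomial.vars_antideriv [DecidableEq σ] (i : σ) (p : MvPolynomial σ R) :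
    (antideriv i p).vars ⊆ insert i p.vars := by
  refine (vars_sum_subset _ _).trans (biUnion_subset.2 fun m hm v hv => ?_)
  rw [vars_monomial (div_ne_zero (mem_support_iff.1 hm) (Nat.cast_add_one_ne_zero _))] at hv
  rcases mem_union.1 (Finsupp.support_add hv) with hv | hv
  · exact mem_insert_of_mem ((mem_vars_iff_mem_support v).2 ⟨m, hm, hv⟩)
  · exact mem_insert.2 (Or.inl (Finsupp.mem_support_single _ _ _ |>.1 hv).1)

end Antideriv

theorem MvPolynomial.bind₁_congr_of_vars {R σ τ : Type*} [CommSemiring R]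
    {f g : σ → MvPolynomial τ R} {p : MvPolynomial σ R} (h : ∀ i ∈ p.vars, f i = g i) :
    bind₁ f p = bind₁ g p :=
  eval₂Hom_congr' rfl (fun i hi _ => h i hi) rfl

section LogChart

variable {K : ℕ} (ρ : Fin K → ℝ) (P : Fin K → MvPolynomial (Fin K) ℝ)

/-- `none` is the coordinate `t = log x` and `some l` the coordinate `z_l = y_l x^{-ρ_l}`. -/
noncomputable def logChart (s : ℝ × (Fin K → ℝ)) : Option (Fin K) → ℝ :=
  fun v => v.elim (Real.log s.1) fun l => s.2 l * s.1 ^ (-ρ l)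

/-- `V` in the coordinates of `logChart`: `∂_t + Σ_l P_l(z) ∂_{z_l}`. -/
noncomputable def logVectorField :
    Derivation ℝ (MvPolynomial (Option (Fin K)) ℝ) (MvPolynomial (Option (Fin K)) ℝ) :=
  mkDerivation ℝ fun v => v.elim 1 fun l => rename some (P l)

variable {ρ P}

theorem hasFDerivAt_logChart
    (hPhom : ∀ i, ∀ c : ℝ, 0 < c → ∀ z : Fin K → ℝ,
      eval (fun l => c ^ ρ l * z l) (P i) = c ^ ρ i * eval z (P i))
    {x : ℝ} (hx : 0 < x) (y : Fin K → ℝ) (v : Option (Fin K)) :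
    ∃ D : ℝ × (Fin K → ℝ) →L[ℝ] ℝ, HasFDerivAt (fun s => logChart ρ s v) D (x, y) ∧
      D (x, fun l => ρ l * y l + eval y (P l)) =
        eval (logChart ρ (x, y)) (logVectorField P (X v)) := by
  rcases v with _ | l
  · have ht := (Real.hasDerivAt_log hx.ne').comp_hasFDerivAt (x, y)
      (hasFDerivAt_fst (𝕜 := ℝ) (E := ℝ) (F := Fin K → ℝ))
    refine ⟨_, ht, ?_⟩
    simp [logVectorField, hx.ne']
  · have hz : HasFDerivAt (fun s : ℝ × (Fin K → ℝ) => s.2 l)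
        ((ContinuousLinearMap.proj l).comp (ContinuousLinearMap.snd ℝ ℝ (Fin K → ℝ))) (x, y) :=
      ((ContinuousLinearMap.proj l).comp (ContinuousLinearMap.snd ℝ ℝ (Fin K → ℝ))).hasFDerivAt
    have hw := (Real.hasDerivAt_rpow_const (p := -ρ l) (Or.inl hx.ne')).comp_hasFDerivAt
      (x, y) (hasFDerivAt_fst (𝕜 := ℝ) (E := ℝ) (F := Fin K → ℝ))
    refine ⟨_, hz.mul hw, ?_⟩
    -- homogeneity turns `x^{-ρ_l} P_l(y)` into `P_l(z)`
    have hP := eval_mul_rpow_neg_of_homogeneous (hPhom l) hx y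
    simp only [logVectorField, mkDerivation_X, Option.elim, eval_rename, Function.comp_def,
      logChart, hP, add_apply, smul_apply,
      ContinuousLinearMap.comp_apply, ContinuousLinearMap.coe_fst', ContinuousLinearMap.coe_snd',
      ContinuousLinearMap.proj_apply, smul_eq_mul, Real.rpow_sub_one hx.ne']
    field_simp
    ring

theorem hasFDerivAt_eval_logChart
    (hPhom : ∀ i, ∀ c : ℝ, 0 < c → ∀ z : Fin K → ℝ,
      eval (fun l => c ^ ρ l * z l) (P i) = c ^ ρ i * eval z (P i))
    {x : ℝ} (hx : 0 < x) (y : Fin K → ℝ) (p : MvPolynomial (Option (Fin K)) ℝ) :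
    ∃ D : ℝ × (Fin K → ℝ) →L[ℝ] ℝ, HasFDerivAt (fun s => eval (logChart ρ s) p) D (x, y) ∧
      D (x, fun l => ρ l * y l + eval y (P l)) = eval (logChart ρ (x, y)) (logVectorField P p) := by
  choose D hD hDV using hasFDerivAt_logChart hPhom hx y
  refine ⟨_, hasFDerivAt_eval hD p, ?_⟩
  conv_rhs => rw [← aeval_X_left_apply p, Derivation.map_mvPolynomial_aeval]
  simp [hDV]

end LogChart

section FirstIntegrals

variable {K : ℕ} (P : Fin K → MvPolynomial (Fin K) ℝ)

/-- Here and in `firstIntegral` the `else` branches only make the recursion well founded: they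
are never reached when each `P i` involves only variables `< i`. -/
noncomputable def logCorrection : Fin K → MvPolynomial (Option (Fin K)) ℝ
  | i => antideriv none
      (bind₁ (fun l => if l < i then X (some l) + logCorrection l else 0) (P i))

noncomputable def firstIntegral : Fin K → MvPolynomial (Option (Fin K)) ℝ
  | i => X (some i) - bind₁ (fun v => v.elim (X none) fun l => if l < i then firstIntegral l else 0)
      (logCorrection P i)

noncomputable def firstIntegralCoords (v : Option (Fin K)) : MvPolynomial (Option (Fin K)) ℝ :=
  v.elim (X none) (firstIntegral P)

variable {P}

theorem vars_logCorrection (hPvars : ∀ i, ∀ v ∈ (P i).vars, v < i) (i : Fin K) :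
    ∀ v ∈ (logCorrection P i).vars, ∀ l : Fin K, v = some l → l < i := by
  induction i using WellFoundedLT.induction with
  | _ i IH =>
  rintro v hv l rfl
  rw [logCorrection] at hv
  have hv := mem_of_mem_insert_of_ne (vars_antideriv _ _ hv) (Option.some_ne_none l)
  obtain ⟨m, hm, hlm⟩ := mem_biUnion.1 (vars_bind₁ _ _ hv)
  have hmi := hPvars i m hm
  rw [if_pos hmi] at hlm
  rcases mem_union.1 (vars_add_subset _ _ hlm) with hl | hl
  · rw [vars_X, mem_singleton, Option.some_inj] at hl
    exact hl ▸ hmi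
  · exact (IH m hmi _ hl l rfl).trans hmi

theorem logCorrection_eq (hPvars : ∀ i, ∀ v ∈ (P i).vars, v < i) (i : Fin K) :
    logCorrection P i = antideriv none (bind₁ (fun l => X (some l) + logCorrection P l) (P i)) := by
  rw [logCorrection]
  exact congrArg _ (bind₁_congr_of_vars fun l hl => if_pos (hPvars i l hl))

theorem firstIntegral_eq (hPvars : ∀ i, ∀ v ∈ (P i).vars, v < i) (i : Fin K) :
    firstIntegral P i = X (some i) - bind₁ (firstIntegralCoords P) (logCorrection P i) := by
  rw [firstIntegral]
  refine congrArg _ (bind₁_congr_of_vars fun v hv => ?_)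
  rcases v with _ | l
  · rfl
  · exact if_pos (vars_logCorrection hPvars i _ hv l rfl)

theorem bind₁_firstIntegralCoords_bind₁_X_add_logCorrection
    (hPvars : ∀ i, ∀ v ∈ (P i).vars, v < i) (p : MvPolynomial (Fin K) ℝ) :
    bind₁ (firstIntegralCoords P) (bind₁ (fun l => X (some l) + logCorrection P l) p) =
      rename some p := by
  rw [bind₁_bind₁, rename_eq_aeval, aeval_eq_bind₁]
  refine congrArg (bind₁ · p) (funext fun l => ?_)
  rw [map_add, bind₁_X_right, firstIntegralCoords, Option.elim, firstIntegral_eq hPvars,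
    sub_add_cancel, Function.comp_apply]

theorem logVectorField_bind₁_firstIntegralCoords (q : MvPolynomial (Option (Fin K)) ℝ)
    (hq : ∀ l, some l ∈ q.vars → logVectorField P (firstIntegral P l) = 0) :
    logVectorField P (bind₁ (firstIntegralCoords P) q) =
      bind₁ (firstIntegralCoords P) (pderiv none q) := by
  rw [← aeval_eq_bind₁, Derivation.map_mvPolynomial_aeval, Fintype.sum_option]
  have hsome (l : Fin K) : aeval (firstIntegralCoords P) (pderiv (some l) q) •
      logVectorField P (firstIntegralCoords P (some l)) = 0 := by
    by_cases hl : some l ∈ q.vars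
    · rw [firstIntegralCoords, Option.elim, hq l hl, smul_zero]
    · rw [pderiv_eq_zero_of_notMem_vars hl, map_zero, zero_smul]
  rw [sum_eq_zero fun l _ => hsome l, add_zero, firstIntegralCoords, Option.elim, logVectorField,
    mkDerivation_X, Option.elim, smul_eq_mul, mul_one, aeval_eq_bind₁]

theorem logVectorField_firstIntegral (hPvars : ∀ i, ∀ v ∈ (P i).vars, v < i) (i : Fin K) :
    logVectorField P (firstIntegral P i) = 0 := by
  induction i using WellFoundedLT.induction with
  | _ i IH =>
  rw [firstIntegral_eq hPvars, map_sub, logVectorField_bind₁_firstIntegralCoords,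
    logCorrection_eq hPvars, pderiv_antideriv,
    bind₁_firstIntegralCoords_bind₁_X_add_logCorrection hPvars]
  · simp [logVectorField]
  · exact fun l hl => IH l (vars_logCorrection hPvars i _ hl l rfl)

end FirstIntegrals

theorem eval_logChart_bind₁_firstIntegralCoords {K : ℕ} (ρ : Fin K → ℝ)
    (P : Fin K → MvPolynomial (Fin K) ℝ) (s : ℝ × (Fin K → ℝ))
    (q : MvPolynomial (Option (Fin K)) ℝ) :
    eval (logChart ρ s) (bind₁ (firstIntegralCoords P) q) =
      eval (fun v => v.elim (Real.log s.1) fun l => eval (logChart ρ s) (firstIntegral P l)) q := by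
  refine (eval₂Hom_bind₁ _ _ _ _).trans (congrArg (eval · q) (funext fun v => ?_))
  rcases v with _ | l <;> simp [firstIntegralCoords, logChart]

theorem resonant_vector_field_log_normal_form_general {K : ℕ}
    (ρ : Fin K → ℝ)
    (P : Fin K → MvPolynomial (Fin K) ℝ)
    (hPvars : ∀ i, ∀ v ∈ (P i).vars, v < i)
    (hPhom : ∀ i, ∀ c : ℝ, 0 < c → ∀ z : Fin K → ℝ,
      MvPolynomial.eval (fun l => c ^ (ρ l) * z l) (P i) =
        c ^ (ρ i) * MvPolynomial.eval z (P i))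
    (P₀ : MvPolynomial (Fin K) ℝ)
    (hP₀hom : ∀ c : ℝ, 0 < c → ∀ z : Fin K → ℝ,
      MvPolynomial.eval (fun l => c ^ (ρ l) * z l) P₀ = c * MvPolynomial.eval z P₀) :
    ∃ Q : Fin K → MvPolynomial (Option (Fin K)) ℝ,
    ∃ Q₀ : MvPolynomial (Option (Fin K)) ℝ,
    ∃ Y : Fin K → ℝ × (Fin K → ℝ) → ℝ,
      (∀ i, ∀ v ∈ (Q i).vars, ∀ l : Fin K, v = some l → l < i) ∧
      (∀ i, ∀ x : ℝ, 0 < x → ∀ y : Fin K → ℝ,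
        Y i (x, y) = y i * x ^ (-(ρ i)) -
          MvPolynomial.eval
            (fun v : Option (Fin K) => v.elim (Real.log x) (fun l => Y l (x, y))) (Q i)) ∧
      (∀ i, ∀ x : ℝ, 0 < x → ∀ y : Fin K → ℝ,
        ∃ D : ℝ × (Fin K → ℝ) →L[ℝ] ℝ, HasFDerivAt (Y i) D (x, y) ∧
          D (x, fun l => ρ l * y l + MvPolynomial.eval y (P l)) = 0) ∧
      (∀ x : ℝ, 0 < x → ∀ y : Fin K → ℝ,
        ∃ D : ℝ × (Fin K → ℝ) →L[ℝ] ℝ,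
          HasFDerivAt (fun p : ℝ × (Fin K → ℝ) =>
            MvPolynomial.eval
              (fun v : Option (Fin K) => v.elim (Real.log p.1) (fun l => Y l p)) Q₀)
            D (x, y) ∧
          D (x, fun l => ρ l * y l + MvPolynomial.eval y (P l)) =
            x⁻¹ * MvPolynomial.eval y P₀) := by
  set Q₀ := antideriv none (bind₁ (fun l => X (some l) + logCorrection P l) P₀)
  refine ⟨logCorrection P, Q₀, fun i s => eval (logChart ρ s) (firstIntegral P i),
    vars_logCorrection hPvars, ?_, ?_, ?_⟩
  · intro i x _ y
    dsimp only
    rw [firstIntegral_eq hPvars, map_sub, eval_X, eval_logChart_bind₁_firstIntegralCoords]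
    rfl
  · intro i x hx y
    obtain ⟨D, hD, hDV⟩ := hasFDerivAt_eval_logChart hPhom hx y (firstIntegral P i)
    exact ⟨D, hD, by rw [hDV, logVectorField_firstIntegral hPvars, map_zero]⟩
  · intro x hx y
    obtain ⟨D, hD, hDV⟩ :=
      hasFDerivAt_eval_logChart hPhom hx y (bind₁ (firstIntegralCoords P) Q₀)
    refine ⟨D, by simpa only [eval_logChart_bind₁_firstIntegralCoords] using hD, ?_⟩
    rw [hDV, logVectorField_bind₁_firstIntegralCoords _
      fun l _ => logVectorField_firstIntegral hPvars l, pderiv_antideriv,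
      bind₁_firstIntegralCoords_bind₁_X_add_logCorrection hPvars, eval_rename, ← Real.rpow_neg_one]
    exact eval_mul_rpow_neg_of_homogeneous (by simpa only [Real.rpow_one] using hP₀hom) hx y

/-- **Normal form for a resonant radial vector field: logarithmic corrections.**
Let `ρᵢ > 0` be weights, `Pᵢ` polynomials in the variables of index `< i` which are
weighted homogeneous of degree `ρᵢ`, and `P₀` weighted homogeneous of degree `1`.
Consider the vector field `V = x ∂ₓ + Σᵢ (ρᵢ yᵢ + Pᵢ(y)) ∂_{yᵢ}` on `(0,∞) × ℝ^K`.
Then there are polynomials `Qᵢ` in `(Z₀, …, Z_{i-1}, t)` and `Q₀` in `(Z, t)` such that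
the functions `Yᵢ`, defined recursively by `Yᵢ = yᵢ x^{-ρᵢ} - Qᵢ(Y₀, …, Y_{i-1}, log x)`,
satisfy `V Yᵢ = 0`, and `V (Q₀(Y, log x)) = x⁻¹ P₀(y)`.  Here a polynomial in the `Zₗ`
and `t` is encoded as an `MvPolynomial` over `Option (Fin K)`, with `none` the variable
`t` and `some l` the variable `Z_l`. -/
theorem resonant_vector_field_log_normal_form {K : ℕ}
    (ρ : Fin K → ℝ) (hρ : ∀ i, 0 < ρ i)
    (P : Fin K → MvPolynomial (Fin K) ℝ)
    (hPvars : ∀ i, ∀ v ∈ (P i).vars, v < i)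
    (hPhom : ∀ i, ∀ c : ℝ, 0 < c → ∀ z : Fin K → ℝ,
      MvPolynomial.eval (fun l => c ^ (ρ l) * z l) (P i) =
        c ^ (ρ i) * MvPolynomial.eval z (P i))
    (P₀ : MvPolynomial (Fin K) ℝ)
    (hP₀hom : ∀ c : ℝ, 0 < c → ∀ z : Fin K → ℝ,
      MvPolynomial.eval (fun l => c ^ (ρ l) * z l) P₀ = c * MvPolynomial.eval z P₀) :
    ∃ Q : Fin K → MvPolynomial (Option (Fin K)) ℝ,
    ∃ Q₀ : MvPolynomial (Option (Fin K)) ℝ,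
    ∃ Y : Fin K → ℝ × (Fin K → ℝ) → ℝ,
      (∀ i, ∀ v ∈ (Q i).vars, ∀ l : Fin K, v = some l → l < i) ∧
      (∀ i, ∀ x : ℝ, 0 < x → ∀ y : Fin K → ℝ,
        Y i (x, y) = y i * x ^ (-(ρ i)) -
          MvPolynomial.eval
            (fun v : Option (Fin K) => v.elim (Real.log x) (fun l => Y l (x, y))) (Q i)) ∧
      (∀ i, ∀ x : ℝ, 0 < x → ∀ y : Fin K → ℝ,
        ∃ D : ℝ × (Fin K → ℝ) →L[ℝ] ℝ, HasFDerivAt (Y i) D (x, y) ∧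
          D (x, fun l => ρ l * y l + MvPolynomial.eval y (P l)) = 0) ∧
      (∀ x : ℝ, 0 < x → ∀ y : Fin K → ℝ,
        ∃ D : ℝ × (Fin K → ℝ) →L[ℝ] ℝ,
          HasFDerivAt (fun p : ℝ × (Fin K → ℝ) =>
            MvPolynomial.eval
              (fun v : Option (Fin K) => v.elim (Real.log p.1) (fun l => Y l p)) Q₀)
            D (x, y) ∧
          D (x, fun l => ρ l * y l + MvPolynomial.eval y (P l)) =
            x⁻¹ * MvPolynomial.eval y P₀) :=
  resonant_vector_field_log_normal_form_general ρ P hPvars hPhom P₀ hP₀hom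
end

section
/- Let β ∈ ℂ, δ > 0, C > 0 and μ ∈ ℝ with μ > Im β. Suppose f : (0,δ) → ℂ is continuous with |f(t)| ≤ C t^μ for all t ∈ (0,δ). Then for every x ∈ (0,δ) the integral u(x) := i x^{−iβ} ∫₀^x f(t) t^{iβ−1} dt converges absolutely, u is differentiable on (0,δ) with −i x u'(x) + β u(x) = f(x) for all x ∈ (0,δ), and |u(x)| ≤ C x^μ / (μ − Im β) for all x ∈ (0,δ). -/
open MeasureTheory intervalIntegral

/-- The particular solution `u(x) = i x^{-iβ} ∫₀ˣ f(t) t^{iβ-1} dt` of the transport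
equation `-i x u' + β u = f`, with real powers written via `exp` and `log`. -/
noncomputable def transportSolution (β : ℂ) (f : ℝ → ℂ) (x : ℝ) : ℂ :=
  Complex.I * Complex.exp (-(Complex.I * β) * (Real.log x : ℂ)) *
    ∫ t in (0:ℝ)..x, f t * Complex.exp ((Complex.I * β - 1) * (Real.log t : ℂ))

/-!
With `x^{iβ-1}` of modulus `x^{-Im β - 1}`, the bound `|f(t)| ≤ C t^μ` makes the integrand
`O(t^{μ - Im β - 1})`, integrable at `0` since `μ > Im β`; integrating this power and
multiplying by `|x^{-iβ}| = x^{Im β}` gives the bound on `u`.  The equation follows from the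
product rule and the fundamental theorem of calculus, because `x · x^{-iβ} · x^{iβ-1} = 1`.
-/

open Set Complex

section PowerBound

variable {E : Type*} [NormedAddCommGroup E] {g : ℝ → E} {C ν x : ℝ}

lemma intervalIntegrable_of_norm_le_rpow (hν : 0 < ν) (hx : 0 ≤ x)
    (hg : AEStronglyMeasurable g (volume.restrict (Ioc 0 x)))
    (hbound : ∀ t ∈ Ioc 0 x, ‖g t‖ ≤ C * t ^ (ν - 1)) :
    IntervalIntegrable g volume 0 x := by
  have hpow : IntervalIntegrable (fun t : ℝ => C * t ^ (ν - 1)) volume 0 x :=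
    (intervalIntegrable_rpow' (by linarith)).const_mul C
  refine hpow.mono_fun (by rwa [uIoc_of_le hx]) ?_
  rw [uIoc_of_le hx, Filter.EventuallyLE, ae_restrict_iff' measurableSet_Ioc]
  exact Filter.Eventually.of_forall fun t ht => (hbound t ht).trans (le_abs_self _)

lemma norm_integral_le_of_norm_le_rpow [NormedSpace ℝ E] (hν : 0 < ν) (hx : 0 ≤ x)
    (hbound : ∀ t ∈ Ioc 0 x, ‖g t‖ ≤ C * t ^ (ν - 1)) :
    ‖∫ t in (0:ℝ)..x, g t‖ ≤ C * x ^ ν / ν := by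
  calc ‖∫ t in (0:ℝ)..x, g t‖ ≤ ∫ t in (0:ℝ)..x, C * t ^ (ν - 1) :=
        norm_integral_le_of_norm_le hx (Filter.Eventually.of_forall hbound)
          ((intervalIntegrable_rpow' (by linarith)).const_mul C)
    _ = C * x ^ ν / ν := by
        rw [intervalIntegral.integral_const_mul, integral_rpow (Or.inl (by linarith)),
          sub_add_cancel, Real.zero_rpow hν.ne']
        ring

end PowerBound

section ComplexPower

variable {x : ℝ}

lemma norm_cexp_mul_log (z : ℂ) (hx : 0 < x) : ‖exp (z * (Real.log x : ℂ))‖ = x ^ z.re := by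
  rw [norm_exp, re_mul_ofReal, Real.rpow_def_of_pos hx, mul_comm]

lemma cexp_neg_log (hx : 0 < x) : exp (-(Real.log x : ℂ)) = (x : ℂ)⁻¹ := by
  rw [exp_neg, ofReal_log hx.le, exp_log (ofReal_ne_zero.mpr hx.ne')]

lemma hasDerivAt_cexp_mul_log (z : ℂ) (hx : 0 < x) :
    HasDerivAt (fun y : ℝ => exp (z * (Real.log y : ℂ)))
      (exp (z * (Real.log x : ℂ)) * (z * (x : ℂ)⁻¹)) x := by
  have hlog := ((Real.hasDerivAt_log hx.ne').ofReal_comp).const_mul z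
  push_cast at hlog
  exact hlog.cexp

end ComplexPower

section TransportSolution

noncomputable def transportKernel (β : ℂ) (f : ℝ → ℂ) (t : ℝ) : ℂ :=
  f t * exp ((I * β - 1) * (Real.log t : ℂ))

variable {β : ℂ} {f : ℝ → ℂ} {x : ℝ}

lemma transportSolution_eq (β : ℂ) (f : ℝ → ℂ) (x : ℝ) :
    transportSolution β f x =
      I * exp (-(I * β) * (Real.log x : ℂ)) * ∫ t in (0:ℝ)..x, transportKernel β f t :=
  rfl

lemma ContinuousOn.transportKernel {s : Set ℝ} (hf : ContinuousOn f s) (h0 : (0 : ℝ) ∉ s) :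
    ContinuousOn (transportKernel β f) s :=
  hf.mul <| continuous_exp.comp_continuousOn <| continuousOn_const.mul <|
    continuous_ofReal.comp_continuousOn <|
      Real.continuousOn_log.mono fun _ ht => ne_of_mem_of_not_mem ht h0

lemma norm_transportKernel_le {C μ t : ℝ} (ht : 0 < t) (hft : ‖f t‖ ≤ C * t ^ μ) :
    ‖transportKernel β f t‖ ≤ C * t ^ (μ - β.im - 1) := by
  have hre : (I * β - 1).re = -β.im - 1 := by simp
  calc ‖transportKernel β f t‖ = ‖f t‖ * t ^ (-β.im - 1) := by
        rw [transportKernel, norm_mul, norm_cexp_mul_log _ ht, hre]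
    _ ≤ C * t ^ μ * t ^ (-β.im - 1) := by gcongr
    _ = C * t ^ (μ - β.im - 1) := by
        rw [mul_assoc, ← Real.rpow_add ht]
        ring_nf

lemma norm_transportSolution (hx : 0 < x) :
    ‖transportSolution β f x‖ = x ^ β.im * ‖∫ t in (0:ℝ)..x, transportKernel β f t‖ := by
  have hre : (-(I * β)).re = β.im := by simp
  rw [transportSolution_eq, norm_mul, norm_mul, norm_I, one_mul, norm_cexp_mul_log _ hx, hre]

lemma hasDerivAt_integral_transportKernel {U : Set ℝ} (hU : IsOpen U) (hxU : x ∈ U)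
    (h0 : (0 : ℝ) ∉ U) (hf : ContinuousOn f U)
    (hint : IntervalIntegrable (transportKernel β f) volume 0 x) :
    HasDerivAt (fun y => ∫ t in (0:ℝ)..y, transportKernel β f t) (transportKernel β f x) x :=
  have hk := hf.transportKernel (β := β) h0
  integral_hasDerivAt_right hint (hk.stronglyMeasurableAtFilter hU x hxU)
    (hk.continuousAt (hU.mem_nhds hxU))

lemma hasDerivAt_transportSolution (hx : 0 < x)
    (hF : HasDerivAt (fun y => ∫ t in (0:ℝ)..y, transportKernel β f t)
      (transportKernel β f x) x) :
    HasDerivAt (transportSolution β f) (I * (f x - β * transportSolution β f x) / x) x := by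
  set A := exp (-(I * β) * (Real.log x : ℂ))
  set F := ∫ t in (0:ℝ)..x, transportKernel β f t
  set e := exp ((I * β - 1) * (Real.log x : ℂ))
  have hu : HasDerivAt (transportSolution β f)
      (I * (A * (-(I * β) * (x : ℂ)⁻¹)) * F + I * A * (f x * e)) x :=
    ((hasDerivAt_cexp_mul_log (-(I * β)) hx).const_mul I).mul hF
  have hAe : A * e = (x : ℂ)⁻¹ := by
    rw [← exp_add, ← add_mul, ← cexp_neg_log hx]
    ring_nf
  refine hu.congr_deriv ?_
  rw [show transportSolution β f x = I * A * F from rfl]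
  linear_combination (I * f x) * hAe

end TransportSolution

theorem transport_equation_particular_solution_general (β : ℂ) (δ C μ : ℝ)
    (hμ : β.im < μ)
    (f : ℝ → ℂ) (hf : ContinuousOn f (Set.Ioo 0 δ))
    (hbound : ∀ t ∈ Set.Ioo (0:ℝ) δ, ‖f t‖ ≤ C * t ^ μ) :
    (∀ x ∈ Set.Ioo (0:ℝ) δ,
      IntervalIntegrable
        (fun t => f t * Complex.exp ((Complex.I * β - 1) * (Real.log t : ℂ)))
        MeasureTheory.volume 0 x) ∧
    (∀ x ∈ Set.Ioo (0:ℝ) δ, ∃ d : ℂ,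
      HasDerivAt (transportSolution β f) d x ∧
      -Complex.I * (x : ℂ) * d + β * transportSolution β f x = f x) ∧
    (∀ x ∈ Set.Ioo (0:ℝ) δ,
      ‖transportSolution β f x‖ ≤ C * x ^ μ / (μ - β.im)) := by
  have hν : 0 < μ - β.im := sub_pos.mpr hμ
  have h0 : (0 : ℝ) ∉ Ioo 0 δ := fun h => lt_irrefl 0 h.1
  have hk := hf.transportKernel (β := β) h0
  have hIoc : ∀ x ∈ Ioo 0 δ, Ioc 0 x ⊆ Ioo 0 δ := fun x hx t ht => ⟨ht.1, ht.2.trans_lt hx.2⟩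
  have hkbound : ∀ x ∈ Ioo 0 δ, ∀ t ∈ Ioc 0 x, ‖transportKernel β f t‖ ≤ C * t ^ (μ - β.im - 1) :=
    fun x hx t ht => norm_transportKernel_le ht.1 (hbound t (hIoc x hx ht))
  have hint : ∀ x ∈ Ioo 0 δ, IntervalIntegrable (transportKernel β f) volume 0 x :=
    fun x hx => intervalIntegrable_of_norm_le_rpow hν hx.1.le
      ((hk.mono (hIoc x hx)).aestronglyMeasurable measurableSet_Ioc) (hkbound x hx)
  refine ⟨hint, fun x hx => ⟨_, hasDerivAt_transportSolution hx.1
    (hasDerivAt_integral_transportKernel isOpen_Ioo hx h0 hf (hint x hx)), ?_⟩, fun x hx => ?_⟩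
  · have hx' : (x : ℂ) ≠ 0 := ofReal_ne_zero.mpr hx.1.ne'
    field_simp
    linear_combination (-(f x) + β * transportSolution β f x) * I_mul_I
  · calc ‖transportSolution β f x‖
        = x ^ β.im * ‖∫ t in (0:ℝ)..x, transportKernel β f t‖ := norm_transportSolution hx.1
      _ ≤ x ^ β.im * (C * x ^ (μ - β.im) / (μ - β.im)) :=
          mul_le_mul_of_nonneg_left (norm_integral_le_of_norm_le_rpow hν hx.1.le (hkbound x hx))
            (Real.rpow_nonneg hx.1.le _)
      _ = C * x ^ μ / (μ - β.im) := by
          rw [← mul_div_assoc, mul_left_comm, ← Real.rpow_add hx.1, add_sub_cancel]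

/-- **Solution of the model transport equation with decay.**
Suppose `μ > Im β`, and `f : (0,δ) → ℂ` is continuous with `|f(t)| ≤ C t^μ`.  Then for
every `x ∈ (0,δ)`, the integral defining `u(x) = i x^{-iβ} ∫₀ˣ f(t) t^{iβ-1} dt`
converges absolutely, `u` is differentiable with `-i x u'(x) + β u(x) = f(x)`, and
`|u(x)| ≤ C x^μ / (μ - Im β)`. -/
theorem transport_equation_particular_solution (β : ℂ) (δ C μ : ℝ)
    (hδ : 0 < δ) (hC : 0 < C) (hμ : β.im < μ)
    (f : ℝ → ℂ) (hf : ContinuousOn f (Set.Ioo 0 δ))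
    (hbound : ∀ t ∈ Set.Ioo (0:ℝ) δ, ‖f t‖ ≤ C * t ^ μ) :
    (∀ x ∈ Set.Ioo (0:ℝ) δ,
      IntervalIntegrable
        (fun t => f t * Complex.exp ((Complex.I * β - 1) * (Real.log t : ℂ)))
        MeasureTheory.volume 0 x) ∧
    (∀ x ∈ Set.Ioo (0:ℝ) δ, ∃ d : ℂ,
      HasDerivAt (transportSolution β f) d x ∧
      -Complex.I * (x : ℂ) * d + β * transportSolution β f x = f x) ∧
    (∀ x ∈ Set.Ioo (0:ℝ) δ,
      ‖transportSolution β f x‖ ≤ C * x ^ μ / (μ - β.im)) :=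
  transport_equation_particular_solution_general β δ C μ hμ f hf hbound
end

section
/- Let 0 < δ ≤ 1, k ≥ 1 and let r₁,…,r_k be negative real numbers. Suppose u : (0,δ) × (−δ,δ)^k → ℂ is smooth and satisfies the transport equation x ∂u/∂x + Σ_{j=1}^{k} r_j y_j ∂u/∂y_j = 0 on (0,δ) × (−δ,δ)^k. Then there exists a smooth function û on the box ∏_{j=1}^{k} (−δ^{1−r_j}, δ^{1−r_j}) such that u(x,y) = û(y₁ x^{−r₁},…, y_k x^{−r_k}) for all (x,y) ∈ (0,δ) × (−δ,δ)^k. -/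
open Set Topology Filter

/-!
The PDE says that `u` is annihilated by the Euler field `V(x, y) = (x, (rⱼ yⱼ)ⱼ)`. Its integral
curves, reparametrised by `x`, are the curves `x ↦ (x, (zⱼ x^{rⱼ})ⱼ)`, so `u` is constant along
each of them as long as the curve stays in the domain. Since `rⱼ ≤ 0`, the set of admissible `x`
is an interval, and for `z` in the box it is nonempty (it contains points just below `δ`). Hence
`uhat z := u(x, (zⱼ x^{rⱼ})ⱼ)` for any admissible `x` is well defined; it is smooth because near
`z` the same `x` stays admissible, so `uhat` locally agrees with `u` composed with an affine map.
-/

noncomputable section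

variable {ι : Type*} {E : Type*} [NormedAddCommGroup E] [NormedSpace ℝ E]

def transportDomain (δ : ℝ) (ι : Type*) : Set (ℝ × (ι → ℝ)) :=
  Ioo 0 δ ×ˢ univ.pi fun _ : ι => Ioo (-δ) δ

def blowupBox (δ : ℝ) (r : ι → ℝ) : Set (ι → ℝ) :=
  univ.pi fun j => Ioo (-(δ ^ (1 - r j))) (δ ^ (1 - r j))

def eulerField (r : ι → ℝ) (p : ℝ × (ι → ℝ)) : ℝ × (ι → ℝ) :=
  (p.1, fun j => r j * p.2 j)

def blowupCurve (r z : ι → ℝ) (x : ℝ) : ℝ × (ι → ℝ) :=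
  (x, fun j => z j * x ^ r j)

theorem isOpen_transportDomain [Finite ι] (δ : ℝ) : IsOpen (transportDomain δ ι) :=
  isOpen_Ioo.prod (isOpen_set_pi finite_univ fun _ _ => isOpen_Ioo)

theorem hasDerivAt_blowupCurve [Fintype ι] (r z : ι → ℝ) {x : ℝ} (hx : 0 < x) :
    HasDerivAt (blowupCurve r z) (x⁻¹ • eulerField r (blowupCurve r z x)) x := by
  have hcoord : ∀ j, HasDerivAt (fun x => z j * x ^ r j) (x⁻¹ * (r j * (z j * x ^ r j))) x :=
    fun j => ((Real.hasDerivAt_rpow_const (Or.inl hx.ne')).const_mul (z j)).congr_deriv <| by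
      rw [Real.rpow_sub_one hx.ne']
      field_simp
  refine ((hasDerivAt_id x).prodMk (hasDerivAt_pi.2 hcoord)).congr_deriv ?_
  ext j <;> simp [eulerField, blowupCurve, hx.ne']

theorem comp_blowupCurve_eq_of_convex [Fintype ι] {r z : ι → ℝ} {u : ℝ × (ι → ℝ) → E}
    {D : Set (ℝ × (ι → ℝ))} {I : Set ℝ} (hD : IsOpen D) (hu : DifferentiableOn ℝ u D)
    (hPDE : ∀ p ∈ D, fderiv ℝ u p (eulerField r p) = 0)
    (hI : Convex ℝ I) (hI0 : I ⊆ Ioi 0) (hID : MapsTo (blowupCurve r z) I D)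
    {x₁ x₂ : ℝ} (h₁ : x₁ ∈ I) (h₂ : x₂ ∈ I) :
    u (blowupCurve r z x₁) = u (blowupCurve r z x₂) := by
  have hderiv : ∀ x ∈ I, HasDerivWithinAt (u ∘ blowupCurve r z) 0 I x := by
    intro x hx
    have hux := (hu.differentiableAt (hD.mem_nhds (hID hx))).hasFDerivAt
    have hcomp := hux.comp_hasDerivAt x (hasDerivAt_blowupCurve r z (hI0 hx))
    rw [map_smul, hPDE _ (hID hx), smul_zero] at hcomp
    exact hcomp.hasDerivWithinAt
  have hle := hI.norm_image_sub_le_of_norm_hasDerivWithin_le hderiv (fun _ _ => norm_zero.le) h₁ h₂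
  rw [zero_mul, norm_le_zero_iff, sub_eq_zero] at hle
  exact hle.symm

theorem blowupCurve_mem_transportDomain_iff {δ : ℝ} {r z : ι → ℝ} {x : ℝ} :
    blowupCurve r z x ∈ transportDomain δ ι ↔ x ∈ Ioo 0 δ ∧ ∀ j, |z j * x ^ r j| < δ := by
  simp only [blowupCurve, transportDomain, mem_prod, Set.mem_pi, mem_univ, true_implies, mem_Ioo,
    abs_lt]

theorem convex_preimage_blowupCurve {r : ι → ℝ} (hr : ∀ j, r j ≤ 0) (δ : ℝ) (z : ι → ℝ) :
    Convex ℝ (blowupCurve r z ⁻¹' transportDomain δ ι) := by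
  refine OrdConnected.convex ⟨?_⟩
  intro x₁ h₁ x₂ h₂ x ⟨hx₁x, hxx₂⟩
  rw [mem_preimage, blowupCurve_mem_transportDomain_iff] at h₁ h₂ ⊢
  have hx : 0 < x := h₁.1.1.trans_le hx₁x
  refine ⟨⟨hx, hxx₂.trans_lt h₂.1.2⟩, fun j => ?_⟩
  calc |z j * x ^ r j| = |z j| * x ^ r j := by rw [abs_mul, abs_of_pos (Real.rpow_pos_of_pos hx _)]
    _ ≤ |z j| * x₁ ^ r j :=
      mul_le_mul_of_nonneg_left (Real.rpow_le_rpow_of_nonpos h₁.1.1 hx₁x (hr j)) (abs_nonneg _)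
    _ = |z j * x₁ ^ r j| := by rw [abs_mul, abs_of_pos (Real.rpow_pos_of_pos h₁.1.1 _)]
    _ < δ := h₁.2 j

theorem comp_blowupCurve_eq_of_mem_transportDomain [Fintype ι] {δ : ℝ} {r z : ι → ℝ}
    (hr : ∀ j, r j ≤ 0) {u : ℝ × (ι → ℝ) → E} (hu : DifferentiableOn ℝ u (transportDomain δ ι))
    (hPDE : ∀ p ∈ transportDomain δ ι, fderiv ℝ u p (eulerField r p) = 0) {x₁ x₂ : ℝ}
    (h₁ : blowupCurve r z x₁ ∈ transportDomain δ ι)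
    (h₂ : blowupCurve r z x₂ ∈ transportDomain δ ι) :
    u (blowupCurve r z x₁) = u (blowupCurve r z x₂) :=
  comp_blowupCurve_eq_of_convex (isOpen_transportDomain δ) hu hPDE
    (convex_preimage_blowupCurve hr δ z) (fun _ hx => hx.1.1) (fun _ hx => hx) h₁ h₂

theorem nonempty_preimage_blowupCurve [Finite ι] {δ : ℝ} (hδ : 0 < δ) {r z : ι → ℝ}
    (hz : z ∈ blowupBox δ r) : (blowupCurve r z ⁻¹' transportDomain δ ι).Nonempty := by
  have hat_δ : ∀ j, z j * δ ^ r j ∈ Ioo (-δ) δ := by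
    intro j
    have hzj := abs_lt.2 (hz j trivial)
    rw [mem_Ioo, ← abs_lt, abs_mul, abs_of_pos (Real.rpow_pos_of_pos hδ _)]
    calc |z j| * δ ^ r j < δ ^ (1 - r j) * δ ^ r j := by gcongr
      _ = δ := by rw [← Real.rpow_add hδ, sub_add_cancel, Real.rpow_one]
  have hnear_δ : ∀ j, ∀ᶠ x in 𝓝 δ, z j * x ^ r j ∈ Ioo (-δ) δ := fun j =>
    (continuousAt_const.mul (Real.continuousAt_rpow_const δ (r j) (Or.inl hδ.ne'))).eventually_mem
      (isOpen_Ioo.mem_nhds (hat_δ j))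
  obtain ⟨x, hx, hxy⟩ :=
    (Eventually.and (Ioo_mem_nhdsLT hδ) (nhdsWithin_le_nhds (eventually_all.2 hnear_δ))).exists
  exact ⟨x, hx, fun j _ => hxy j⟩

theorem blowupCurve_mul_rpow_neg (r y : ι → ℝ) {x : ℝ} (hx : 0 < x) :
    blowupCurve r (fun j => y j * x ^ (-r j)) x = (x, y) := by
  simp [blowupCurve, mul_assoc, ← Real.rpow_add hx]

theorem mul_rpow_neg_mem_blowupBox {δ : ℝ} {r : ι → ℝ} (hr : ∀ j, r j ≤ 0) {x : ℝ}
    (hx : x ∈ Ioo 0 δ) {y : ι → ℝ} (hy : y ∈ univ.pi fun _ : ι => Ioo (-δ) δ) :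
    (fun j => y j * x ^ (-r j)) ∈ blowupBox δ r := by
  intro j _
  have hyj := abs_lt.2 (hy j trivial)
  have hδ : 0 < δ := hx.1.trans hx.2
  rw [mem_Ioo, ← abs_lt, abs_mul, abs_of_pos (Real.rpow_pos_of_pos hx.1 _)]
  calc |y j| * x ^ (-r j) ≤ |y j| * δ ^ (-r j) :=
        mul_le_mul_of_nonneg_left (Real.rpow_le_rpow hx.1.le hx.2.le (neg_nonneg.2 (hr j)))
          (abs_nonneg _)
    _ < δ * δ ^ (-r j) := by gcongr
    _ = δ ^ (1 - r j) := by rw [sub_eq_add_neg, Real.rpow_add hδ, Real.rpow_one]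

theorem contDiffOn_comp_blowupCurve [Fintype ι] {n : WithTop ℕ∞} {r : ι → ℝ}
    {u : ℝ × (ι → ℝ) → E} {D : Set (ℝ × (ι → ℝ))} (hD : IsOpen D) (hu : ContDiffOn ℝ n u D)
    (hinv : ∀ z x₁ x₂, blowupCurve r z x₁ ∈ D → blowupCurve r z x₂ ∈ D →
      u (blowupCurve r z x₁) = u (blowupCurve r z x₂))
    {s : Set (ι → ℝ)} {xs : (ι → ℝ) → ℝ} (hxs : ∀ z ∈ s, blowupCurve r z (xs z) ∈ D) :
    ContDiffOn ℝ n (fun z => u (blowupCurve r z (xs z))) s := by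
  refine contDiffOn_of_locally_contDiffOn fun z₀ hz₀ => ?_
  have hcurve : ContDiff ℝ n fun z => blowupCurve r z (xs z₀) :=
    contDiff_const.prodMk (contDiff_pi.2 fun j => (contDiff_apply ℝ ℝ j).mul contDiff_const)
  refine ⟨_, hD.preimage hcurve.continuous, hxs z₀ hz₀, ?_⟩
  exact ((hu.comp hcurve.contDiffOn fun _ hz => hz).mono inter_subset_right).congr
    fun z hz => hinv z _ _ (hxs z hz.1) hz.2

end

theorem transport_solution_is_function_of_blowup_coordinates_general
    (δ : ℝ) (hδ0 : 0 < δ) (k : ℕ)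
    (r : Fin k → ℝ) (hr : ∀ j, r j < 0)
    (u : ℝ × (Fin k → ℝ) → ℂ)
    (hu : ContDiffOn ℝ (⊤ : ℕ∞) u
      (Set.Ioo 0 δ ×ˢ Set.univ.pi fun _ : Fin k => Set.Ioo (-δ) δ))
    (hPDE : ∀ p ∈ (Set.Ioo 0 δ ×ˢ Set.univ.pi fun _ : Fin k => Set.Ioo (-δ) δ),
      fderiv ℝ u p (p.1, fun j => r j * p.2 j) = 0) :
    ∃ uhat : (Fin k → ℝ) → ℂ,
      ContDiffOn ℝ (⊤ : ℕ∞) uhat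
        (Set.univ.pi fun j => Set.Ioo (-(δ ^ (1 - r j))) (δ ^ (1 - r j))) ∧
      ∀ x ∈ Set.Ioo (0:ℝ) δ, ∀ y ∈ (Set.univ.pi fun _ : Fin k => Set.Ioo (-δ) δ),
        u (x, y) = uhat (fun j => y j * x ^ (-(r j))) := by
  have hr' : ∀ j, r j ≤ 0 := fun j => (hr j).le
  have hinv : ∀ z x₁ x₂, blowupCurve r z x₁ ∈ transportDomain δ (Fin k) →
      blowupCurve r z x₂ ∈ transportDomain δ (Fin k) →
      u (blowupCurve r z x₁) = u (blowupCurve r z x₂) := fun _ _ _ =>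
    comp_blowupCurve_eq_of_mem_transportDomain hr' (hu.differentiableOn (by simp)) hPDE
  choose! xs hxs using fun z (hz : z ∈ blowupBox δ r) => nonempty_preimage_blowupCurve hδ0 hz
  refine ⟨fun z => u (blowupCurve r z (xs z)),
    contDiffOn_comp_blowupCurve (isOpen_transportDomain δ) hu hinv hxs, fun x hx y hy => ?_⟩
  have hz := mul_rpow_neg_mem_blowupBox hr' hx hy
  have hxy : blowupCurve r (fun j => y j * x ^ (-r j)) x ∈ transportDomain δ (Fin k) := by
    rw [blowupCurve_mul_rpow_neg r y hx.1]
    exact ⟨hx, hy⟩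
  dsimp only
  rw [hinv _ _ _ (hxs _ hz) hxy, blowupCurve_mul_rpow_neg r y hx.1]

/-- **Smooth solutions of the radial transport equation are functions of `yⱼ x^{-rⱼ}`.**
Let `0 < δ ≤ 1`, `k ≥ 1`, and `r₁, …, r_k < 0`.  If `u` is smooth on
`(0,δ) × (-δ,δ)^k` and satisfies `x ∂u/∂x + Σⱼ rⱼ yⱼ ∂u/∂yⱼ = 0` there (expressed as the
vanishing of the differential of `u` in the direction `(x, (rⱼ yⱼ)ⱼ)`), then there is a
smooth function `uhat` on the box `∏ⱼ (-δ^{1-rⱼ}, δ^{1-rⱼ})` with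
`u(x,y) = uhat(y₁ x^{-r₁}, …, y_k x^{-r_k})`. -/
theorem transport_solution_is_function_of_blowup_coordinates
    (δ : ℝ) (hδ0 : 0 < δ) (hδ1 : δ ≤ 1) (k : ℕ) (hk : 1 ≤ k)
    (r : Fin k → ℝ) (hr : ∀ j, r j < 0)
    (u : ℝ × (Fin k → ℝ) → ℂ)
    (hu : ContDiffOn ℝ (⊤ : ℕ∞) u
      (Set.Ioo 0 δ ×ˢ Set.univ.pi fun _ : Fin k => Set.Ioo (-δ) δ))
    (hPDE : ∀ p ∈ (Set.Ioo 0 δ ×ˢ Set.univ.pi fun _ : Fin k => Set.Ioo (-δ) δ),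
      fderiv ℝ u p (p.1, fun j => r j * p.2 j) = 0) :
    ∃ uhat : (Fin k → ℝ) → ℂ,
      ContDiffOn ℝ (⊤ : ℕ∞) uhat
        (Set.univ.pi fun j => Set.Ioo (-(δ ^ (1 - r j))) (δ ^ (1 - r j))) ∧
      ∀ x ∈ Set.Ioo (0:ℝ) δ, ∀ y ∈ (Set.univ.pi fun _ : Fin k => Set.Ioo (-δ) δ),
        u (x, y) = uhat (fun j => y j * x ^ (-(r j))) :=
  transport_solution_is_function_of_blowup_coordinates_general δ hδ0 k r hr u hu hPDE
end
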